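/- arXiv:2409.01155 — 2 statements merged into one kernel-verified Lean document; each statement's English description precedes it below -/
import Mathlib

section
/- There exists a Borel measure μ on ℝ with 0 < μ(I) < ∞ for every dyadic interval I that is sibling balanced but not balanced. (An explicit example is dμ(x) = Σ_{k≥0} 2^{-k}(δ_{2^k}(x) + δ_{(3/2)·2^k}(x)) + w(x)dx, where w(x) = 1 for x < 1 and w(x) = 2^{-3k} for 2^k < x < 2^{k+1}.) -/
open MeasureTheory Set

noncomputable section

namespace Dyadic

/-- The dyadic interval `[2^{-k} n, 2^{-k}(n+1))`, indexed by `I = (k, n) : ℤ × ℤ`. -/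
def dint (I : ℤ × ℤ) : Set ℝ :=
  Set.Ico ((2:ℝ) ^ (-I.1) * (I.2 : ℝ)) ((2:ℝ) ^ (-I.1) * ((I.2 : ℝ) + 1))

/-- The left (`r = false`) and right (`r = true`) dyadic children of `I`. -/
def ch (I : ℤ × ℤ) (r : Bool) : ℤ × ℤ := (I.1 + 1, 2 * I.2 + if r then 1 else 0)

/-- The dyadic parent `Î` of `I` (using Euclidean division, i.e. floor division). -/
def pa (I : ℤ × ℤ) : ℤ × ℤ := (I.1 - 1, I.2 / 2)

/-- The dyadic sibling `I^s` of `I` (the other child of the parent). -/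
def sib (I : ℤ × ℤ) : ℤ × ℤ := (I.1, if I.2 % 2 = 0 then I.2 + 1 else I.2 - 1)

/-- `μ(I)` as a real number. -/
def muR (μ : Measure ℝ) (I : ℤ × ℤ) : ℝ := (μ (dint I)).toReal

/-- `m(I) = μ(I₋)·μ(I₊)/μ(I)`. -/
def mQ (μ : Measure ℝ) (I : ℤ × ℤ) : ℝ :=
  muR μ (ch I false) * muR μ (ch I true) / muR μ I

/-- `0 < μ(I) < ∞` for every dyadic interval `I`. -/
def GoodMeasure (μ : Measure ℝ) : Prop :=
  ∀ I : ℤ × ℤ, 0 < μ (dint I) ∧ μ (dint I) < ⊤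

/-- `μ` is sibling balanced with constant `K`, i.e. `[μ]_sib ≤ K`. -/
def SibBalanced (μ : Measure ℝ) (K : ℝ) : Prop :=
  ∀ I : ℤ × ℤ, mQ μ I ≤ K * mQ μ (sib I)

/-- `μ` is balanced with constant `C`: `C⁻¹·m(Î) ≤ m(I) ≤ C·m(Î)` for all `I`. -/
def Balanced (μ : Measure ℝ) (C : ℝ) : Prop :=
  ∀ I : ℤ × ℤ, mQ μ (pa I) ≤ C * mQ μ I ∧ mQ μ I ≤ C * mQ μ (pa I)

/-- The μ-average `⟨f⟩_I` of `f` over the dyadic interval `I`. -/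
def avg (μ : Measure ℝ) (I : ℤ × ℤ) (f : ℝ → ℝ) : ℝ :=
  (muR μ I)⁻¹ * ∫ x in dint I, f x ∂μ

/-- The Haar function `h_I = √(m(I)) (1_{I₋}/μ(I₋) − 1_{I₊}/μ(I₊))`. -/
def haar (μ : Measure ℝ) (I : ℤ × ℤ) : ℝ → ℝ := fun x =>
  Real.sqrt (mQ μ I) *
    ((dint (ch I false)).indicator (fun _ => (muR μ (ch I false))⁻¹) x -
      (dint (ch I true)).indicator (fun _ => (muR μ (ch I true))⁻¹) x)

/-- The pairing `⟨f, g⟩ = ∫ f g dμ`. -/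
def pairing (μ : Measure ℝ) (f g : ℝ → ℝ) : ℝ := ∫ x, f x * g x ∂μ

/-- The dyadic Hilbert transform
`ℋf = Σ_{I∈𝒟} (⟨f,h_{I₊}⟩h_{I₋} − ⟨f,h_{I₋}⟩h_{I₊})`. -/
def Hop (μ : Measure ℝ) (f : ℝ → ℝ) : ℝ → ℝ := fun x =>
  ∑' I : ℤ × ℤ,
    (pairing μ f (haar μ (ch I true)) * haar μ (ch I false) x -
      pairing μ f (haar μ (ch I false)) * haar μ (ch I true) x)

/-- The BMO quotient `μ(I)⁻¹ ∫_I |b − ⟨b⟩_{Î}| dμ`. -/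
def bmoQuot (μ : Measure ℝ) (b : ℝ → ℝ) (I : ℤ × ℤ) : ℝ :=
  (muR μ I)⁻¹ * ∫ x in dint I, |b x - avg μ (pa I) b| ∂μ

/-- The martingale BMO norm `‖b‖_{BMO(μ)} = sup_{I∈𝒟} μ(I)⁻¹ ∫_I |b − ⟨b⟩_{Î}| dμ`. -/
def bmoNorm (μ : Measure ℝ) (b : ℝ → ℝ) : ℝ := ⨆ I : ℤ × ℤ, bmoQuot μ b I

/-- Membership in martingale BMO: locally integrable with finite BMO norm. -/
def MemBMO (μ : Measure ℝ) (b : ℝ → ℝ) : Prop :=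
  LocallyIntegrable b μ ∧ BddAbove (Set.range (bmoQuot μ b))

/-- The conditional expectation `𝖤_k b = Σ_{I ∈ 𝒟_k} ⟨b⟩_I 1_I`. -/
def condExp (μ : Measure ℝ) (k : ℤ) (b : ℝ → ℝ) : ℝ → ℝ := fun x =>
  ∑' n : ℤ, (dint (k, n)).indicator (fun _ => avg μ (k, n) b) x

/-- Bounded, compactly supported, measurable function. -/
def BCS (f : ℝ → ℝ) : Prop :=
  Measurable f ∧ (∃ M : ℝ, ∀ x, |f x| ≤ M) ∧ HasCompactSupport f

/-- The dual weight `σ = ω^{−1/(p−1)}`. -/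
def dual (p : ℝ) (ω : ℝ → ℝ) : ℝ → ℝ := fun x => ω x ^ (-(1:ℝ) / (p - 1))

/-- A weight: μ-a.e. positive and locally μ-integrable. -/
def IsWeight (μ : Measure ℝ) (ω : ℝ → ℝ) : Prop :=
  (∀ᵐ x ∂μ, 0 < ω x) ∧ LocallyIntegrable ω μ

/-- `[ω]_{Â_p(μ)} ≤ K`: over all pairs `I, J` with `J ∈ {I, Î}` or `I ∈ {J, Ĵ}`. -/
def AhatLE (μ : Measure ℝ) (p : ℝ) (ω : ℝ → ℝ) (K : ℝ) : Prop :=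
  ∀ I J : ℤ × ℤ, (J = I ∨ J = pa I ∨ I = pa J) →
    avg μ I ω * (avg μ J (dual p ω)) ^ (p - 1) ≤ K

/-- `[ω]_{A_p(μ)} ≤ K`. -/
def ApLE (μ : Measure ℝ) (p : ℝ) (ω : ℝ → ℝ) (K : ℝ) : Prop :=
  ∀ I : ℤ × ℤ, avg μ I ω * (avg μ I (dual p ω)) ^ (p - 1) ≤ K

/-- The coefficients `c_p(I, J)` of the class `A_p^{sib}(μ)`. -/
def cSib (μ : Measure ℝ) (p : ℝ) (I J : ℤ × ℤ) : ℝ :=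
  if I = J then 1
  else if pa I = sib (pa J) then
    (mQ μ (pa I) / muR μ I) ^ (p - 1) * (mQ μ (pa J) / muR μ J)
  else if J = sib (pa I) then
    (mQ μ (pa I) / muR μ I) ^ (p - 1) * (mQ μ J / muR μ J)
  else if I = sib (pa J) then
    (mQ μ I / muR μ I) ^ (p - 1) * (mQ μ (pa J) / muR μ J)
  else 0

/-- `[ω]_{A_p^{sib}(μ)} ≤ K`. -/
def ApSibLE (μ : Measure ℝ) (p : ℝ) (ω : ℝ → ℝ) (K : ℝ) : Prop :=
  ∀ I J : ℤ × ℤ, cSib μ p I J * (avg μ I ω * (avg μ J (dual p ω)) ^ (p - 1)) ≤ K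

/-- `[ω]_{A_p^{bal}(μ)} ≤ K`: over all pairs `I, J` with `I = J`, or `J` a child of
`I^s`, or `I` a child of `J^s`. -/
def ApBalLE (μ : Measure ℝ) (p : ℝ) (ω : ℝ → ℝ) (K : ℝ) : Prop :=
  ∀ I J : ℤ × ℤ, (I = J ∨ pa J = sib I ∨ pa I = sib J) →
    mQ μ I ^ (p / 2) * mQ μ J ^ (p / 2) / (muR μ I ^ (p - 1) * muR μ J) *
      (avg μ I ω * (avg μ J (dual p ω)) ^ (p - 1)) ≤ K

/-- An η-sparse family of dyadic intervals. -/
def IsSparse (μ : Measure ℝ) (η : ℝ) (S : Set (ℤ × ℤ)) : Prop :=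
  ∃ E : ℤ × ℤ → Set ℝ,
    (∀ I ∈ S, MeasurableSet (E I) ∧ E I ⊆ dint I ∧
      ENNReal.ofReal η * μ (dint I) ≤ μ (E I)) ∧ S.PairwiseDisjoint E

/-- `𝒜_𝒮(f₁,f₂) = Σ_{I∈𝒮} ⟨f₁⟩_I ⟨f₂⟩_I μ(I)`. -/
def formA (μ : Measure ℝ) (S : Set (ℤ × ℤ)) (f₁ f₂ : ℝ → ℝ) : ℝ :=
  ∑' I : S, avg μ (I : ℤ × ℤ) f₁ * avg μ (I : ℤ × ℤ) f₂ * muR μ (I : ℤ × ℤ)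

/-- `ℰ₁^𝒮(f₁,f₂) = Σ_{I,J∈𝒮, Î=(Ĵ)^s} ⟨f₁⟩_I ⟨f₂⟩_J m(Î)^{1/2} m(Ĵ)^{1/2}`. -/
def formE1 (μ : Measure ℝ) (S : Set (ℤ × ℤ)) (f₁ f₂ : ℝ → ℝ) : ℝ :=
  ∑' q : {q : (ℤ × ℤ) × (ℤ × ℤ) // q.1 ∈ S ∧ q.2 ∈ S ∧ pa q.1 = sib (pa q.2)},
    avg μ (q : (ℤ × ℤ) × (ℤ × ℤ)).1 f₁ * avg μ (q : (ℤ × ℤ) × (ℤ × ℤ)).2 f₂ *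
      Real.sqrt (mQ μ (pa (q : (ℤ × ℤ) × (ℤ × ℤ)).1)) *
      Real.sqrt (mQ μ (pa (q : (ℤ × ℤ) × (ℤ × ℤ)).2))

/-- `ℰ₂^𝒮(f₁,f₂) = Σ_{I,J∈𝒮, I=(Ĵ)^s} ⟨f₁⟩_I ⟨f₂⟩_J m(I)^{1/2} m(Ĵ)^{1/2}`. -/
def formE2 (μ : Measure ℝ) (S : Set (ℤ × ℤ)) (f₁ f₂ : ℝ → ℝ) : ℝ :=
  ∑' q : {q : (ℤ × ℤ) × (ℤ × ℤ) // q.1 ∈ S ∧ q.2 ∈ S ∧ q.1 = sib (pa q.2)},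
    avg μ (q : (ℤ × ℤ) × (ℤ × ℤ)).1 f₁ * avg μ (q : (ℤ × ℤ) × (ℤ × ℤ)).2 f₂ *
      Real.sqrt (mQ μ (q : (ℤ × ℤ) × (ℤ × ℤ)).1) *
      Real.sqrt (mQ μ (pa (q : (ℤ × ℤ) × (ℤ × ℤ)).2))

/-- `ℰ₃^𝒮(f₁,f₂) = Σ_{I,J∈𝒮, J=(Î)^s} ⟨f₁⟩_I ⟨f₂⟩_J m(Î)^{1/2} m(J)^{1/2}`. -/
def formE3 (μ : Measure ℝ) (S : Set (ℤ × ℤ)) (f₁ f₂ : ℝ → ℝ) : ℝ :=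
  ∑' q : {q : (ℤ × ℤ) × (ℤ × ℤ) // q.1 ∈ S ∧ q.2 ∈ S ∧ q.2 = sib (pa q.1)},
    avg μ (q : (ℤ × ℤ) × (ℤ × ℤ)).1 f₁ * avg μ (q : (ℤ × ℤ) × (ℤ × ℤ)).2 f₂ *
      Real.sqrt (mQ μ (pa (q : (ℤ × ℤ) × (ℤ × ℤ)).1)) *
      Real.sqrt (mQ μ (q : (ℤ × ℤ) × (ℤ × ℤ)).2)

/-- The measure `μ_k = Σ_{ℓ∈ℤ} δ_ℓ + 2^{−k}·(Lebesgue restricted to ℝ∖ℤ)`. -/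
def muK (k : ℕ) : Measure ℝ :=
  Measure.sum (fun ℓ : ℤ => Measure.dirac (ℓ : ℝ)) +
    ENNReal.ofReal ((2:ℝ) ^ (-(k:ℤ))) •
      volume.restrict ((Set.range (fun n : ℤ => (n : ℝ)))ᶜ)

open Classical in
/-- The function `b_k`: equal to `1` on ℤ and `2^k` off ℤ. -/
def bK (k : ℕ) : ℝ → ℝ := fun x =>
  if ∃ n : ℤ, (n : ℝ) = x then 1 else (2:ℝ) ^ k


open scoped ENNReal

section Stmt1Construction

def aj (j : ℕ) : ℝ := ((2:ℝ)^j)⁻¹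
def dj (j : ℕ) : ℝ := ((2:ℝ)^j)⁻¹ ^ 3
def p2 (j : ℕ) : ℝ := 3 * (2:ℝ)^j / 2
def blk (j : ℕ) : Set ℝ := Set.Ico ((2:ℝ)^j) ((2:ℝ)^(j+1))

def mu : Measure ℝ :=
  volume.restrict (Set.Iio 1) +
  Measure.sum (fun j : ℕ =>
    ENNReal.ofReal (dj j) • volume.restrict (blk j) +
    ENNReal.ofReal (aj j) • (Measure.dirac ((2:ℝ)^j) + Measure.dirac (p2 j)))

lemma aj_pos (j : ℕ) : 0 < aj j := by unfold aj; positivity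
lemma dj_pos (j : ℕ) : 0 < dj j := by unfold dj; positivity
lemma one_le_p1 (j : ℕ) : (1:ℝ) ≤ 2^j := one_le_pow₀ (by norm_num)
lemma one_lt_p2 (j : ℕ) : (1:ℝ) < p2 j := by
  have := one_le_p1 j; unfold p2; nlinarith
lemma p1_lt_p2 (j : ℕ) : (2:ℝ)^j < p2 j := by
  have : (0:ℝ) < 2^j := by positivity
  unfold p2; nlinarith
lemma p2_lt_top (j : ℕ) : p2 j < (2:ℝ)^(j+1) := by
  have : (0:ℝ) < 2^j := by positivity
  unfold p2; rw [pow_succ]; nlinarith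

lemma mu_apply {S : Set ℝ} (hS : MeasurableSet S) :
    mu S = volume (S ∩ Set.Iio 1) +
      ∑' j : ℕ, (ENNReal.ofReal (dj j) * volume (S ∩ blk j) +
        ENNReal.ofReal (aj j) * (S.indicator 1 ((2:ℝ)^j) + S.indicator 1 (p2 j))) := by
  simp [mu, Measure.sum_apply _ hS, Measure.restrict_apply hS,
    Measure.dirac_apply' _ hS, _root_.mul_add]

lemma muB {j : ℕ} {l r : ℝ} (hl : (2:ℝ)^j ≤ l) (hlr : l ≤ r) (hr : r ≤ (2:ℝ)^(j+1)) :
    mu (Set.Ico l r) = ENNReal.ofReal (dj j * (r - l)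
      + (if (2:ℝ)^j ∈ Set.Ico l r then aj j else 0)
      + (if p2 j ∈ Set.Ico l r then aj j else 0)) := by
  have hp1 : (1:ℝ) ≤ l := le_trans (one_le_p1 j) hl
  have hrl : (0:ℝ) ≤ r - l := by linarith
  have haj := le_of_lt (aj_pos j)
  have hdj := le_of_lt (dj_pos j)
  rw [mu_apply measurableSet_Ico]
  have h1 : Set.Ico l r ∩ Set.Iio 1 = ∅ := by
    rw [Set.eq_empty_iff_forall_notMem]
    rintro x ⟨hx1, hx2⟩
    exact absurd hx2 (not_lt.mpr (le_trans hp1 hx1.1))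
  rw [h1, measure_empty, zero_add]
  rw [tsum_eq_single j ?_]
  · have hsub : Set.Ico l r ∩ blk j = Set.Ico l r :=
      Set.inter_eq_left.mpr (fun x hx => ⟨le_trans hl hx.1, lt_of_lt_of_le hx.2 hr⟩)
    rw [hsub, Real.volume_Ico,
      ENNReal.ofReal_add (by positivity) (by split <;> simp [haj]),
      ENNReal.ofReal_add (by positivity) (by split <;> simp [haj]),
      ← ENNReal.ofReal_mul hdj]
    rw [Set.indicator_apply, Set.indicator_apply]
    by_cases hm1 : (2:ℝ)^j ∈ Set.Ico l r <;> by_cases hm2 : p2 j ∈ Set.Ico l r <;>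
      simp [hm1, hm2, _root_.mul_add, _root_.add_assoc]
  · intro i hij
    rcases lt_or_gt_of_ne hij with hlt | hgt
    · -- i < j
      have key : (2:ℝ)^(i+1) ≤ 2^j := pow_le_pow_right₀ (by norm_num) hlt
      have ki : (2:ℝ)^i < 2^(i+1) := by rw [pow_succ]; nlinarith [pow_pos (by norm_num : (0:ℝ)<2) i]
      have hb : Set.Ico l r ∩ blk i = ∅ := by
        rw [Set.eq_empty_iff_forall_notMem]
        rintro x ⟨hx1, hx2⟩
        exact absurd hx1.1 (not_le.mpr (lt_of_lt_of_le (lt_of_lt_of_le hx2.2 key) hl))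
      have i1 : (Set.Ico l r).indicator (1 : ℝ → ℝ≥0∞) ((2:ℝ)^i) = 0 :=
        Set.indicator_of_notMem (fun hx =>
          absurd hx.1 (not_le.mpr (lt_of_lt_of_le (lt_of_lt_of_le ki key) hl))) _
      have i2 : (Set.Ico l r).indicator (1 : ℝ → ℝ≥0∞) (p2 i) = 0 :=
        Set.indicator_of_notMem (fun hx =>
          absurd hx.1 (not_le.mpr (lt_of_lt_of_le (lt_of_lt_of_le (p2_lt_top i) key) hl))) _
      rw [hb, i1, i2]; simp
    · -- j < i
      have key : (2:ℝ)^(j+1) ≤ 2^i := pow_le_pow_right₀ (by norm_num) hgt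
      have hb : Set.Ico l r ∩ blk i = ∅ := by
        rw [Set.eq_empty_iff_forall_notMem]
        rintro x ⟨hx1, hx2⟩
        exact absurd hx2.1 (not_le.mpr (lt_of_lt_of_le hx1.2 (le_trans hr key)))
      have i1 : (Set.Ico l r).indicator (1 : ℝ → ℝ≥0∞) ((2:ℝ)^i) = 0 :=
        Set.indicator_of_notMem (fun hx =>
          absurd hx.2 (not_lt.mpr (le_trans (le_trans hr key) (le_refl _)))) _
      have i2 : (Set.Ico l r).indicator (1 : ℝ → ℝ≥0∞) (p2 i) = 0 :=
        Set.indicator_of_notMem (fun hx =>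
          absurd hx.2 (not_lt.mpr (le_trans (le_trans hr key) (le_of_lt (p1_lt_p2 i))))) _
      rw [hb, i1, i2]; simp

def bB (j : ℕ) : ℝ := dj j * 2^j + 2 * aj j
def Psi : ℕ → ℝ
  | 0 => 1
  | j+1 => Psi j + bB j

lemma aj_le_one (j : ℕ) : aj j ≤ 1 := by
  unfold aj
  rw [inv_le_one_iff₀]; right; exact one_le_p1 j
lemma dj_mul_le_aj (j : ℕ) : dj j * 2^j ≤ aj j := by
  have h1 : (0:ℝ) < 2^j := by positivity
  have h2 := aj_le_one j
  have h3 := aj_pos j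
  have : dj j * 2^j = aj j * aj j := by
    unfold dj aj; field_simp
  rw [this]; nlinarith
lemma bB_pos (j : ℕ) : 0 < bB j := by
  have := dj_pos j; have := aj_pos j
  have h1 : (0:ℝ) < 2^j := by positivity
  unfold bB; nlinarith
lemma bB_le (j : ℕ) : bB j ≤ 3 * aj j := by
  have := dj_mul_le_aj j; unfold bB; nlinarith
lemma bB_ge (j : ℕ) : 2 * aj j ≤ bB j := by
  have := dj_pos j
  have h1 : (0:ℝ) < 2^j := by positivity
  unfold bB; nlinarith
lemma Psi_ge_one (j : ℕ) : 1 ≤ Psi j := by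
  induction j with
  | zero => simp [Psi]
  | succ i ih => have := bB_pos i; simp only [Psi]; linarith
lemma Psi_pos (j : ℕ) : 0 < Psi j := lt_of_lt_of_le one_pos (Psi_ge_one j)
lemma Psi_succ_le (j : ℕ) : Psi (j+1) ≤ 4 * Psi j := by
  have h1 := Psi_ge_one j
  have h2 := bB_le j
  have h3 := aj_le_one j
  have h4 := aj_pos j
  simp only [Psi]; nlinarith

lemma muA {l r : ℝ} (hr : r ≤ 1) : mu (Set.Ico l r) = ENNReal.ofReal (r - l) := by
  rw [mu_apply measurableSet_Ico]
  have h1 : Set.Ico l r ∩ Set.Iio 1 = Set.Ico l r :=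
    Set.inter_eq_left.mpr (fun x hx => lt_of_lt_of_le hx.2 hr)
  have h2 : ∀ j : ℕ, (ENNReal.ofReal (dj j) * volume (Set.Ico l r ∩ blk j) +
      ENNReal.ofReal (aj j) * ((Set.Ico l r).indicator 1 ((2:ℝ)^j) +
        (Set.Ico l r).indicator 1 (p2 j))) = 0 := by
    intro j
    have hb : Set.Ico l r ∩ blk j = ∅ := by
      rw [Set.eq_empty_iff_forall_notMem]
      rintro x ⟨hx1, hx2⟩
      exact absurd (lt_of_lt_of_le hx1.2 hr) (not_lt.mpr (le_trans (one_le_p1 j) hx2.1))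
    have i1 : (Set.Ico l r).indicator (1 : ℝ → ℝ≥0∞) ((2:ℝ)^j) = 0 :=
      Set.indicator_of_notMem
        (fun hx => absurd (lt_of_lt_of_le hx.2 hr) (not_lt.mpr (one_le_p1 j))) _
    have i2 : (Set.Ico l r).indicator (1 : ℝ → ℝ≥0∞) (p2 j) = 0 :=
      Set.indicator_of_notMem
        (fun hx => absurd (lt_of_lt_of_le hx.2 hr)
          (not_lt.mpr (le_trans (one_le_p1 j) (le_of_lt (p1_lt_p2 j))))) _
    rw [hb, i1, i2]; simp
  rw [h1, Real.volume_Ico, tsum_congr h2, tsum_zero, add_zero]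

lemma mu_blk (j : ℕ) : mu (Set.Ico ((2:ℝ)^j) ((2:ℝ)^(j+1))) = ENNReal.ofReal (bB j) := by
  have h1 : (0:ℝ) < 2^j := by positivity
  have h2 : (2:ℝ)^j < 2^(j+1) := by rw [pow_succ]; nlinarith
  rw [muB (le_refl _) (le_of_lt h2) (le_refl _)]
  congr 1
  rw [if_pos ⟨le_refl _, h2⟩, if_pos ⟨le_of_lt (p1_lt_p2 j), p2_lt_top j⟩]
  unfold bB
  rw [pow_succ]; ring

lemma muZ (j : ℕ) : mu (Set.Ico (0:ℝ) ((2:ℝ)^j)) = ENNReal.ofReal (Psi j) := by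
  induction j with
  | zero => rw [pow_zero, muA (le_refl _)]; norm_num [Psi]
  | succ i ih =>
    have h1 : (0:ℝ) ≤ 2^i := by positivity
    have h2 : (2:ℝ)^i ≤ 2^(i+1) := by rw [pow_succ]; nlinarith
    rw [← Set.Ico_union_Ico_eq_Ico h1 h2,
      measure_union (Set.Ico_disjoint_Ico_same) measurableSet_Ico,
      ih, mu_blk, ← ENNReal.ofReal_add (le_of_lt (Psi_pos i)) (le_of_lt (bB_pos i))]
    rfl

def nu (l r : ℝ) : ℝ := (mu (Set.Ico l r)).toReal

lemma nuA {l r : ℝ} (hlr : l ≤ r) (hr : r ≤ 1) : nu l r = r - l := by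
  rw [nu, muA hr, ENNReal.toReal_ofReal (by linarith)]

lemma nuB {j : ℕ} {l r : ℝ} (hl : (2:ℝ)^j ≤ l) (hlr : l ≤ r) (hr : r ≤ (2:ℝ)^(j+1)) :
    nu l r = dj j * (r - l)
      + (if (2:ℝ)^j ∈ Set.Ico l r then aj j else 0)
      + (if p2 j ∈ Set.Ico l r then aj j else 0) := by
  have := le_of_lt (aj_pos j)
  have := le_of_lt (dj_pos j)
  have h0 : (0:ℝ) ≤ r - l := by linarith
  rw [nu, muB hl hlr hr, ENNReal.toReal_ofReal]
  have : (0:ℝ) ≤ dj j * (r - l) := by positivity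
  split <;> split <;> linarith

lemma nuZ (j : ℕ) : nu 0 ((2:ℝ)^j) = Psi j := by
  rw [nu, muZ, ENNReal.toReal_ofReal (le_of_lt (Psi_pos j))]

lemma Tpos (k : ℤ) : (0:ℝ) < 2^(-k) := zpow_pos (by norm_num) _

lemma half_zpow (k : ℤ) : (2:ℝ)^(-(k+1)) = (2:ℝ)^(-k)/2 := by
  have : -(k+1) = -k + (-1) := by ring
  rw [this, zpow_add₀ (by norm_num : (2:ℝ) ≠ 0)]
  norm_num
  ring

lemma muR_eq (k n : ℤ) :
    muR mu (k, n) = nu ((2:ℝ)^(-k)*n) ((2:ℝ)^(-k)*n + (2:ℝ)^(-k)) := by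
  unfold muR nu dint
  congr 2
  push_cast
  ring

lemma muR_chf (k n : ℤ) :
    muR mu (ch (k,n) false) = nu ((2:ℝ)^(-k)*n) ((2:ℝ)^(-k)*n + (2:ℝ)^(-k)/2) := by
  unfold muR nu dint ch
  congr 2 <;> simp only [] <;> rw [half_zpow] <;> push_cast <;> ring

lemma muR_cht (k n : ℤ) :
    muR mu (ch (k,n) true) =
      nu ((2:ℝ)^(-k)*n + (2:ℝ)^(-k)/2) ((2:ℝ)^(-k)*n + (2:ℝ)^(-k)) := by
  unfold muR nu dint ch
  congr 2 <;> simp only [] <;> rw [half_zpow] <;> push_cast <;> ring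

lemma mQ_eq (k n : ℤ) :
    mQ mu (k, n) = nu ((2:ℝ)^(-k)*n) ((2:ℝ)^(-k)*n + (2:ℝ)^(-k)/2) *
      nu ((2:ℝ)^(-k)*n + (2:ℝ)^(-k)/2) ((2:ℝ)^(-k)*n + (2:ℝ)^(-k)) /
      nu ((2:ℝ)^(-k)*n) ((2:ℝ)^(-k)*n + (2:ℝ)^(-k)) := by
  unfold mQ
  rw [muR_chf, muR_cht, muR_eq]

lemma mQ_A {k n : ℤ} (hr : (2:ℝ)^(-k)*(n+1) ≤ 1) : mQ mu (k,n) = (2:ℝ)^(-k)/4 := by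
  have hT := Tpos k
  set T := (2:ℝ)^(-k) with hTdef
  set l := T * (n:ℝ) with hldef
  have hr' : l + T ≤ 1 := by rw [hldef]; nlinarith [hr]
  rw [mQ_eq]
  rw [nuA (by linarith) (by linarith), nuA (by linarith) (by linarith),
    nuA (by linarith) (by linarith)]
  rw [show l + T/2 - l = T/2 from by ring, show l + T - (l+T/2) = T/2 from by ring,
    show l + T - l = T from by ring, div_eq_iff (ne_of_gt hT)]
  ring

lemma aj_succ (j : ℕ) : aj (j+1) = aj j / 2 := by
  unfold aj; rw [pow_succ]; field_simp

lemma mQ_B {j : ℕ} {k n : ℤ}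
    (h1 : (2:ℝ)^j ≤ (2:ℝ)^(-k)*n) (h2 : (2:ℝ)^(-k)*n + (2:ℝ)^(-k) ≤ (2:ℝ)^(j+1))
    (hA1 : (2:ℝ)^j ∈ Set.Ico ((2:ℝ)^(-k)*n) ((2:ℝ)^(-k)*n + (2:ℝ)^(-k)) → (2:ℝ)^j = (2:ℝ)^(-k)*n)
    (hA2 : p2 j ∈ Set.Ico ((2:ℝ)^(-k)*n) ((2:ℝ)^(-k)*n + (2:ℝ)^(-k)) → p2 j = (2:ℝ)^(-k)*n) :
    dj j * (2:ℝ)^(-k)/4 ≤ mQ mu (k,n) ∧ mQ mu (k,n) ≤ dj j * (2:ℝ)^(-k)/2 := by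
  have hT := Tpos k
  set T := (2:ℝ)^(-k) with hTdef
  set l := T * (n:ℝ) with hldef
  have i1 : ((2:ℝ)^j ∈ Set.Ico l (l+T)) ↔ ((2:ℝ)^j = l) :=
    ⟨hA1, fun hc => ⟨le_of_eq hc.symm, by rw [hc]; linarith⟩⟩
  have i2 : (p2 j ∈ Set.Ico l (l+T)) ↔ (p2 j = l) :=
    ⟨hA2, fun hc => ⟨le_of_eq hc.symm, by rw [hc]; linarith⟩⟩
  have i1' : ((2:ℝ)^j ∈ Set.Ico l (l+T/2)) ↔ ((2:ℝ)^j = l) :=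
    ⟨fun hm => hA1 ⟨hm.1, by linarith [hm.2]⟩, fun hc => ⟨le_of_eq hc.symm, by rw [hc]; linarith⟩⟩
  have i2' : (p2 j ∈ Set.Ico l (l+T/2)) ↔ (p2 j = l) :=
    ⟨fun hm => hA2 ⟨hm.1, by linarith [hm.2]⟩, fun hc => ⟨le_of_eq hc.symm, by rw [hc]; linarith⟩⟩
  set A : ℝ := (if (2:ℝ)^j = l then aj j else 0) + (if p2 j = l then aj j else 0) with hAdef
  have hA0 : 0 ≤ A := by
    rw [hAdef]; have := le_of_lt (aj_pos j); split <;> split <;> linarith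
  have e1 : nu l (l + T) = dj j * T + A := by
    rw [nuB h1 (by linarith) h2, if_congr i1 rfl rfl, if_congr i2 rfl rfl,
      show l + T - l = T from by ring, hAdef, _root_.add_assoc]
  have e2 : nu l (l + T/2) = dj j * (T/2) + A := by
    rw [nuB h1 (by linarith) (by linarith), if_congr i1' rfl rfl, if_congr i2' rfl rfl,
      show l + T/2 - l = T/2 from by ring, hAdef, _root_.add_assoc]
  have e3 : nu (l + T/2) (l + T) = dj j * (T/2) := by
    rw [nuB (by linarith) (by linarith) h2]
    rw [if_neg, if_neg]
    · rw [show l + T - (l + T/2) = T/2 from by ring]; ring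
    · intro hmem
      have := hA2 ⟨by linarith [hmem.1], hmem.2⟩
      linarith [hmem.1]
    · intro hmem
      have := hA1 ⟨by linarith [hmem.1], hmem.2⟩
      linarith [hmem.1]
  rw [mQ_eq, ← hTdef, ← hldef]
  rw [e1, e2, e3]
  have hx : 0 < dj j * (T/2) := by have := dj_pos j; positivity
  have hden : 0 < dj j * T + A := by nlinarith
  constructor
  · rw [le_div_iff₀ hden]
    nlinarith
  · rw [div_le_iff₀ hden]
    nlinarith

lemma zpow_neg_natCast (j : ℕ) : (2:ℝ)^(-(-(j:ℤ))) = (2:ℝ)^j := by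
  rw [neg_neg, zpow_natCast]

lemma mQ_blk (j : ℕ) : aj j / 2 ≤ mQ mu (-(j:ℤ), 1) ∧ mQ mu (-(j:ℤ), 1) ≤ aj j := by
  have hp : (0:ℝ) < 2^j := by positivity
  have e0 : (2:ℝ)^(-(-(j:ℤ))) = (2:ℝ)^j := zpow_neg_natCast j
  have hm : (2:ℝ)^j * (1:ℤ) + (2:ℝ)^j / 2 = p2 j := by push_cast; unfold p2; ring
  have hr : (2:ℝ)^j * (1:ℤ) + (2:ℝ)^j = (2:ℝ)^(j+1) := by push_cast; rw [pow_succ]; ring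
  have hl : (2:ℝ)^j * ((1:ℤ):ℝ) = (2:ℝ)^j := by push_cast; ring
  rw [mQ_eq, e0, hm, hr, hl]
  have e2 : nu ((2:ℝ)^j) (p2 j) = dj j * (2^j/2) + aj j := by
    rw [nuB (le_refl _) (le_of_lt (p1_lt_p2 j)) (le_of_lt (p2_lt_top j))]
    rw [if_pos ⟨le_refl _, p1_lt_p2 j⟩, if_neg (fun h => lt_irrefl _ h.2)]
    unfold p2; ring
  have e3 : nu (p2 j) ((2:ℝ)^(j+1)) = dj j * (2^j/2) + aj j := by
    rw [nuB (le_of_lt (p1_lt_p2 j)) (le_of_lt (p2_lt_top j)) (le_refl _)]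
    rw [if_neg (fun h => absurd h.1 (not_le.mpr (p1_lt_p2 j))),
      if_pos ⟨le_refl _, p2_lt_top j⟩]
    unfold p2; rw [pow_succ]; ring
  have e1 : nu ((2:ℝ)^j) ((2:ℝ)^(j+1)) = bB j := by
    rw [nu, mu_blk, ENNReal.toReal_ofReal (le_of_lt (bB_pos j))]
  rw [e1, e2, e3]
  have he : dj j * 2^j ≤ aj j := dj_mul_le_aj j
  have he0 : 0 < dj j * 2^j := by have := dj_pos j; positivity
  have ha := aj_pos j
  have hbb : bB j = 2 * (dj j * (2^j/2) + aj j) := by unfold bB; ring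
  rw [hbb]
  have hden : 0 < dj j * (2^j/2) + aj j := by nlinarith
  constructor
  · rw [le_div_iff₀ (by nlinarith)]; nlinarith
  · rw [div_le_iff₀ (by nlinarith)]; nlinarith

lemma mQ_Z (j : ℕ) : aj (j+1) ≤ mQ mu (-((j:ℤ)+1), 0) ∧ mQ mu (-((j:ℤ)+1), 0) ≤ 8 * aj (j+1) := by
  have hp : (0:ℝ) < 2^j := by positivity
  have e0 : (2:ℝ)^(-(-((j:ℤ)+1))) = (2:ℝ)^(j+1) := by
    rw [neg_neg, show (j:ℤ)+1 = ((j+1:ℕ):ℤ) from by push_cast; ring, zpow_natCast]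
  rw [mQ_eq, e0]
  have hz : (2:ℝ)^(j+1) * ((0:ℤ):ℝ) = 0 := by push_cast; ring
  have hh : (2:ℝ)^(j+1)/2 = 2^j := by rw [pow_succ]; ring
  rw [hz, zero_add, zero_add, hh]
  have e1 : nu 0 ((2:ℝ)^j) = Psi j := nuZ j
  have e1' : nu 0 ((2:ℝ)^(j+1)) = Psi (j+1) := nuZ (j+1)
  have e2 : nu ((2:ℝ)^j) ((2:ℝ)^(j+1)) = bB j := by
    rw [nu, mu_blk, ENNReal.toReal_ofReal (le_of_lt (bB_pos j))]
  rw [e1, e1', e2]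
  have h1 := Psi_pos j
  have h2 := Psi_pos (j+1)
  have h3 := Psi_succ_le j
  have h4 := bB_pos j
  have h5 := bB_le j
  have h6 := bB_ge j
  have h7 : Psi j ≤ Psi (j+1) := by simp only [Psi]; linarith
  have ha := aj_pos j
  have hs : aj (j+1) = aj j / 2 := aj_succ j
  constructor
  · rw [le_div_iff₀ h2, hs]; nlinarith
  · rw [div_le_iff₀ h2, hs]; nlinarith

lemma negk_eq {k : ℤ} {j : ℕ} (h : (2:ℝ)^(-k) = 2^j) : -k = (j:ℤ) := by
  have h2 : (2:ℝ)^(-k) = (2:ℝ)^((j:ℕ):ℤ) := by rw [h, zpow_natCast]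
  exact zpow_right_injective₀ (by norm_num) (by norm_num) h2

lemma mem_dyadic_eq {k : ℤ} {q : ℝ} {M m : ℤ} (hq : q = (M:ℝ) * (2:ℝ)^(-k)) :
    q ∈ Set.Ico ((2:ℝ)^(-k)*(m:ℝ)) ((2:ℝ)^(-k)*(m:ℝ) + (2:ℝ)^(-k)) → q = (2:ℝ)^(-k)*(m:ℝ) := by
  have hT := Tpos k
  rintro ⟨ha, hb⟩
  rw [hq] at ha hb ⊢
  have h1 : (m:ℝ) ≤ (M:ℝ) := by nlinarith
  have h2 : (M:ℝ) < (m:ℝ) + 1 := by nlinarith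
  have : M = m := by
    have h1' : m ≤ M := by exact_mod_cast h1
    have h2' : (M:ℝ) < ((m+1 : ℤ):ℝ) := by push_cast; linarith
    have h2'' : M < m + 1 := by exact_mod_cast h2'
    omega
  rw [this]; ring

lemma caseB_setup {k n : ℤ} (h : 1 ≤ (2:ℝ)^(-k)*(n:ℝ)) :
    ∃ (j : ℕ) (M : ℤ), ((M:ℝ) * (2:ℝ)^(-k) = (2:ℝ)^j) ∧ M ≤ n ∧ n < 2*M ∧
      (M = 1 ∨ ∃ e : ℤ, M = 2*e) := by
  have hT := Tpos k
  have hl0 : (0:ℝ) < (2:ℝ)^(-k)*(n:ℝ) := by linarith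
  have hn1 : 1 ≤ n := by
    have hn0 : (0:ℝ) < (n:ℝ) := by nlinarith
    have : (0:ℤ) < n := by exact_mod_cast hn0
    omega
  set j := Nat.log 2 ⌊(2:ℝ)^(-k)*(n:ℝ)⌋₊ with hjdef
  have hlog : Int.log 2 ((2:ℝ)^(-k)*(n:ℝ)) = (j:ℤ) := Int.log_of_one_le_right 2 h
  have P1 : (2:ℝ)^(j:ℤ) ≤ (2:ℝ)^(-k)*(n:ℝ) := by
    rw [← hlog]; exact Int.zpow_log_le_self (by norm_num) hl0
  have P2 : (2:ℝ)^(-k)*(n:ℝ) < (2:ℝ)^((j:ℤ)+1) := by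
    rw [← hlog]; exact Int.lt_zpow_succ_log_self (by norm_num) _
  have hTl : (2:ℝ)^(-k) ≤ (2:ℝ)^(-k)*(n:ℝ) := by
    have : (1:ℝ) ≤ (n:ℝ) := by exact_mod_cast hn1
    nlinarith
  have hks : -k < (j:ℤ)+1 :=
    (zpow_lt_zpow_iff_right₀ (by norm_num : (1:ℝ) < 2)).mp (lt_of_le_of_lt hTl P2)
  have hs0 : 0 ≤ (j:ℤ) + k := by omega
  refine ⟨j, 2^((j:ℤ)+k).toNat, ?_, ?_, ?_, ?_⟩
  · push_cast
    rw [← zpow_natCast (2:ℝ) ((j:ℤ)+k).toNat, Int.toNat_of_nonneg hs0,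
      ← zpow_natCast (2:ℝ) j, ← zpow_add₀ (by norm_num : (2:ℝ) ≠ 0)]
    congr 1; omega
  · have hMT : ((2^(((j:ℤ)+k).toNat) : ℤ):ℝ) * (2:ℝ)^(-k) = (2:ℝ)^(j:ℤ) := by
      push_cast
      rw [← zpow_natCast (2:ℝ) ((j:ℤ)+k).toNat, Int.toNat_of_nonneg hs0,
        ← zpow_add₀ (by norm_num : (2:ℝ) ≠ 0)]
      congr 1; omega
    have : ((2^(((j:ℤ)+k).toNat) : ℤ):ℝ) ≤ (n:ℝ) := by nlinarith [P1, hMT]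
    exact_mod_cast this
  · have hMT : ((2^(((j:ℤ)+k).toNat) : ℤ):ℝ) * (2:ℝ)^(-k) = (2:ℝ)^(j:ℤ) := by
      push_cast
      rw [← zpow_natCast (2:ℝ) ((j:ℤ)+k).toNat, Int.toNat_of_nonneg hs0,
        ← zpow_add₀ (by norm_num : (2:ℝ) ≠ 0)]
      congr 1; omega
    have h2j : (2:ℝ)^((j:ℤ)+1) = 2 * ((2^(((j:ℤ)+k).toNat) : ℤ):ℝ) * (2:ℝ)^(-k) := by
      rw [_root_.mul_assoc, hMT, zpow_add₀ (by norm_num : (2:ℝ) ≠ 0)]; ring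
    have : (n:ℝ) < 2 * ((2^(((j:ℤ)+k).toNat) : ℤ):ℝ) := by
      rw [h2j] at P2; nlinarith
    exact_mod_cast this
  · rcases Nat.eq_zero_or_pos ((j:ℤ)+k).toNat with h0 | h0
    · left; rw [h0]; rfl
    · right
      refine ⟨2^(((j:ℤ)+k).toNat - 1), ?_⟩
      rw [← pow_succ']
      congr 1
      omega

lemma classify (k n : ℤ) :
    ((2:ℝ)^(-k) * ((n:ℝ)+1) ≤ 1) ∨ (1 ≤ (2:ℝ)^(-k) * (n:ℝ)) ∨
      (n = 0 ∧ ∃ i : ℕ, -k = (i:ℤ)+1) := by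
  have hT := Tpos k
  rcases lt_trichotomy n 0 with hn | hn | hn
  · left
    have : (n:ℝ) + 1 ≤ 0 := by
      have : ((n+1:ℤ):ℝ) ≤ 0 := by exact_mod_cast (by omega : n+1 ≤ 0)
      push_cast at this; linarith
    nlinarith
  · subst hn
    by_cases hk : 0 ≤ -k
    · rcases eq_or_lt_of_le hk with hk0 | hk1
      · -- -k = 0
        left
        rw [← hk0, zpow_zero]; norm_num
      · right; right
        exact ⟨rfl, (-k-1).toNat, by omega⟩
    · left
      push_neg at hk
      have : (2:ℝ)^(-k) ≤ 1 := by
        calc (2:ℝ)^(-k) ≤ 2^(0:ℤ) := zpow_le_zpow_right₀ (by norm_num) (by omega)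
        _ = 1 := zpow_zero 2
      push_cast; linarith
  · by_cases hr : (2:ℝ)^(-k) * ((n:ℝ)+1) ≤ 1
    · left; exact hr
    · right; left
      push_neg at hr
      by_cases hk : 0 ≤ -k
      · have hT1 : (1:ℝ) ≤ (2:ℝ)^(-k) := by
          calc (1:ℝ) = 2^(0:ℤ) := (zpow_zero 2).symm
          _ ≤ 2^(-k) := zpow_le_zpow_right₀ (by norm_num) hk
        have hn1 : (1:ℝ) ≤ (n:ℝ) := by exact_mod_cast hn
        nlinarith
      · push_neg at hk
        have hkk : ((k.toNat:ℕ):ℤ) = k := Int.toNat_of_nonneg (by omega)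
        have hTK : (2:ℝ)^(-k) * ((2^(k.toNat) : ℤ):ℝ) = 1 := by
          push_cast
          rw [← zpow_natCast (2:ℝ) k.toNat, hkk, ← zpow_add₀ (by norm_num : (2:ℝ) ≠ 0)]
          rw [_root_.neg_add_cancel, zpow_zero]
        have hlt : ((2^(k.toNat):ℤ):ℝ) < (n:ℝ)+1 := by nlinarith
        have hint : 2^(k.toNat) ≤ n := by
          have : (2^(k.toNat):ℤ) < n+1 := by exact_mod_cast hlt
          omega
        have : ((2^(k.toNat):ℤ):ℝ) ≤ (n:ℝ) := by exact_mod_cast hint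
        nlinarith

lemma dint_eq (k n : ℤ) :
    dint (k,n) = Set.Ico ((2:ℝ)^(-k)*(n:ℝ)) ((2:ℝ)^(-k)*(n:ℝ) + (2:ℝ)^(-k)) := by
  unfold dint; congr 1; push_cast; ring

theorem good : ∀ I : ℤ × ℤ, 0 < mu (dint I) ∧ mu (dint I) < ⊤ := by
  rintro ⟨k, n⟩
  have hT := Tpos k
  rw [dint_eq]
  rcases classify k n with hA | hB | ⟨hn0, i, hki⟩
  · rw [muA (by push_cast at hA ⊢; nlinarith)]
    constructor
    · rw [ENNReal.ofReal_pos]; linarith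
    · exact ENNReal.ofReal_lt_top
  · obtain ⟨j, M, hM, hMn, hn2M, _⟩ := caseB_setup hB
    have hMr : ((M:ℝ)) ≤ (n:ℝ) := by exact_mod_cast hMn
    have h2j1 : (2:ℝ)^(j+1) = 2*(M:ℝ)*(2:ℝ)^(-k) := by
      rw [pow_succ, ← hM]; ring
    have P1 : (2:ℝ)^j ≤ (2:ℝ)^(-k)*(n:ℝ) := by rw [← hM]; nlinarith
    have h2 : (2:ℝ)^(-k)*(n:ℝ) + (2:ℝ)^(-k) ≤ (2:ℝ)^(j+1) := by
      have : (n:ℝ)+1 ≤ 2*(M:ℝ) := by exact_mod_cast (by omega : n+1 ≤ 2*M)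
      rw [h2j1]; nlinarith
    rw [muB P1 (by nlinarith) h2]
    have hdj := dj_pos j
    have haj := le_of_lt (aj_pos j)
    constructor
    · rw [ENNReal.ofReal_pos]
      have h0 : 0 < dj j * ((2:ℝ)^(-k)*(n:ℝ) + (2:ℝ)^(-k) - (2:ℝ)^(-k)*(n:ℝ)) := by
        have : (2:ℝ)^(-k)*(n:ℝ) + (2:ℝ)^(-k) - (2:ℝ)^(-k)*(n:ℝ) = (2:ℝ)^(-k) := by ring
        rw [this]; positivity
      split <;> split <;> linarith
    · exact ENNReal.ofReal_lt_top
  · subst hn0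
    have hk2 : (2:ℝ)^(-k) = (2:ℝ)^((i+1:ℕ)) := by
      have hcast : -k = ((i+1:ℕ):ℤ) := by push_cast; omega
      rw [← zpow_natCast (2:ℝ) (i+1), ← hcast]
    have e0 : (2:ℝ)^(-k)*((0:ℤ):ℝ) = 0 := by push_cast; ring
    rw [e0, zero_add, hk2, muZ (i+1)]
    constructor
    · rw [ENNReal.ofReal_pos]; exact Psi_pos _
    · exact ENNReal.ofReal_lt_top

theorem sibbal : ∀ I : ℤ × ℤ, mQ mu I ≤ 100 * mQ mu (sib I) := by
  rintro ⟨k, n⟩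
  have hT := Tpos k
  rcases classify k n with hA | hB | ⟨hn0, i, hki⟩
  -- Case A : interval in (-∞, 1]
  · by_cases h00 : k = 0 ∧ n = 0
    · obtain ⟨hk0, hn00⟩ := h00
      subst hk0; subst hn00
      have e1 : mQ mu ((0:ℤ), (0:ℤ)) = (2:ℝ)^(-(0:ℤ))/4 := mQ_A (by norm_num)
      have hsib : sib ((0:ℤ), (0:ℤ)) = ((0:ℤ), (1:ℤ)) := by simp [sib]
      have h2 := (mQ_blk 0).1
      simp only [Nat.cast_zero, neg_zero] at h2
      have ha0 : aj 0 = 1 := by unfold aj; norm_num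
      rw [ha0] at h2
      rw [e1, hsib]
      norm_num
      linarith
    · rcases Int.even_or_odd n with ⟨c, hc⟩ | ⟨c, hc⟩
      · -- n even
        have hmod : n % 2 = 0 := by omega
        have hsib : sib (k, n) = (k, n+1) := by simp [sib, hmod]
        have hr2 : (2:ℝ)^(-k) * (((n+1:ℤ):ℝ)+1) ≤ 1 := by
          by_cases hk2 : 0 ≤ -k
          · have hT1 : (1:ℝ) ≤ (2:ℝ)^(-k) := by
              calc (1:ℝ) = 2^(0:ℤ) := (zpow_zero 2).symm
              _ ≤ 2^(-k) := zpow_le_zpow_right₀ (by norm_num) hk2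
            rcases le_or_gt ((n:ℝ)+2) 0 with hneg | hpos
            · push_cast; nlinarith
            · have hn2 : -2 < n := by exact_mod_cast (by linarith : (-2:ℝ) < (n:ℝ))
              have hn0' : 0 ≤ n := by omega
              have hn00 : n = 0 := by
                by_contra hne
                have h1n : 1 ≤ n := by omega
                have h2n : (2:ℝ) ≤ (n:ℝ)+1 := by
                  have : (1:ℝ) ≤ (n:ℝ) := by exact_mod_cast h1n
                  linarith
                nlinarith
              subst hn00
              have hTle : (2:ℝ)^(-k) ≤ 1 := by push_cast at hA; linarith
              have hTeq : (2:ℝ)^(-k) = 1 := le_antisymm hTle hT1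
              have hk00 : -k = ((0:ℕ):ℤ) := negk_eq (by rw [hTeq]; norm_num)
              exact absurd ⟨by omega, rfl⟩ h00
          · push_neg at hk2
            have hkk : ((k.toNat:ℕ):ℤ) = k := Int.toNat_of_nonneg (by omega)
            have hTK : (2:ℝ)^(-k) * ((2^(k.toNat) : ℤ):ℝ) = 1 := by
              push_cast
              rw [← zpow_natCast (2:ℝ) k.toNat, hkk, ← zpow_add₀ (by norm_num : (2:ℝ) ≠ 0)]
              rw [_root_.neg_add_cancel, zpow_zero]
            have hlt : ((n:ℝ)+1) ≤ ((2^(k.toNat):ℤ):ℝ) := by nlinarith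
            have hint : n+1 ≤ 2^(k.toNat) := by exact_mod_cast hlt
            obtain ⟨e, he⟩ : (2:ℤ) ∣ 2^(k.toNat) := dvd_pow_self 2 (by omega : k.toNat ≠ 0)
            have hn2' : n + 2 ≤ 2^(k.toNat) := by omega
            have : ((n:ℝ)+2) ≤ ((2^(k.toNat):ℤ):ℝ) := by exact_mod_cast hn2'
            push_cast
            push_cast at this hTK
            nlinarith
        rw [mQ_A hA, hsib, mQ_A hr2]
        linarith
      · -- n odd
        have hmod : ¬ (n % 2 = 0) := by omega
        have hsib : sib (k, n) = (k, n-1) := by simp [sib, hmod]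
        have hr2 : (2:ℝ)^(-k) * (((n-1:ℤ):ℝ)+1) ≤ 1 := by
          push_cast
          push_cast at hA
          nlinarith
        rw [mQ_A hA, hsib, mQ_A hr2]
        linarith
  -- Case B : inside a block
  · obtain ⟨j, M, hM, hMn, hn2M, hM1⟩ := caseB_setup hB
    have hMr : ((M:ℝ)) ≤ (n:ℝ) := by exact_mod_cast hMn
    have h2j1 : (2:ℝ)^(j+1) = 2*(M:ℝ)*(2:ℝ)^(-k) := by
      rw [pow_succ, ← hM]; ring
    have P1 : (2:ℝ)^j ≤ (2:ℝ)^(-k)*(n:ℝ) := by rw [← hM]; nlinarith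
    have h2 : (2:ℝ)^(-k)*(n:ℝ) + (2:ℝ)^(-k) ≤ (2:ℝ)^(j+1) := by
      have : (n:ℝ)+1 ≤ 2*(M:ℝ) := by exact_mod_cast (by omega : n+1 ≤ 2*M)
      rw [h2j1]; nlinarith
    rcases hM1 with hM1 | ⟨e, he⟩
    · -- M = 1 : the interval is the whole block
      have hn1 : n = 1 := by omega
      subst hn1
      have hTj : (2:ℝ)^(-k) = 2^j := by rw [← hM, hM1]; push_cast; ring
      have hkj : k = -(j:ℤ) := by have := negk_eq hTj; omega
      subst hkj
      have upper := (mQ_blk j).2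
      have hsib : sib (-(j:ℤ), (1:ℤ)) = (-(j:ℤ), (0:ℤ)) := by norm_num [sib]
      rw [hsib]
      rcases Nat.eq_zero_or_pos j with hj0 | hj1
      · subst hj0
        have e1 : mQ mu ((0:ℤ), (0:ℤ)) = (2:ℝ)^(-(0:ℤ))/4 := mQ_A (by norm_num)
        simp only [Nat.cast_zero, neg_zero] at upper ⊢
        rw [e1]
        have ha0 : aj 0 = 1 := by unfold aj; norm_num
        rw [ha0] at upper
        norm_num
        linarith
      · obtain ⟨i, rfl⟩ : ∃ i, j = i+1 := ⟨j-1, by omega⟩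
        have lower := (mQ_Z i).1
        have hcast : (-(((i+1:ℕ)):ℤ)) = -((i:ℤ)+1) := by push_cast; ring
        rw [hcast] at upper ⊢
        have haje := aj_pos (i+1)
        linarith
    · -- M even : proper sub-interval of a block
      have he1 : 1 ≤ e := by omega
      have hp2e : p2 j = ((3*e:ℤ):ℝ) * (2:ℝ)^(-k) := by
        unfold p2; rw [← hM, he]; push_cast; ring
      have hq1 : (2:ℝ)^j = (M:ℝ) * (2:ℝ)^(-k) := hM.symm
      have hq1' : (2:ℝ)^j = ((M:ℤ):ℝ) * (2:ℝ)^(-k) := by exact_mod_cast hq1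
      have hdjT : 0 < dj j * (2:ℝ)^(-k) := by have := dj_pos j; positivity
      rcases Int.even_or_odd n with ⟨c, hc⟩ | ⟨c, hc⟩
      · -- n even : sibling to the right
        have hmod : n % 2 = 0 := by omega
        have hsib : sib (k, n) = (k, n+1) := by simp [sib, hmod]
        have bI := mQ_B P1 h2 (mem_dyadic_eq hq1') (mem_dyadic_eq hp2e)
        have h1' : (2:ℝ)^j ≤ (2:ℝ)^(-k)*(((n+1:ℤ)):ℝ) := by push_cast; nlinarith
        have h2' : (2:ℝ)^(-k)*(((n+1:ℤ)):ℝ) + (2:ℝ)^(-k) ≤ (2:ℝ)^(j+1) := by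
          have hint : n + 2 ≤ 2*M := by omega
          have : ((n:ℝ)+2) ≤ 2*(M:ℝ) := by exact_mod_cast hint
          rw [h2j1]; push_cast; nlinarith
        have bS := mQ_B h1' h2' (mem_dyadic_eq hq1') (mem_dyadic_eq hp2e)
        rw [hsib]
        linarith [bI.2, bS.1]
      · -- n odd : sibling to the left
        have hmod : ¬ (n % 2 = 0) := by omega
        have hsib : sib (k, n) = (k, n-1) := by simp [sib, hmod]
        have bI := mQ_B P1 h2 (mem_dyadic_eq hq1') (mem_dyadic_eq hp2e)
        have h1' : (2:ℝ)^j ≤ (2:ℝ)^(-k)*(((n-1:ℤ)):ℝ) := by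
          have hint : M ≤ n - 1 := by omega
          have : ((M:ℝ)) ≤ ((n:ℝ)-1) := by exact_mod_cast hint
          push_cast; rw [← hM]; nlinarith
        have h2' : (2:ℝ)^(-k)*(((n-1:ℤ)):ℝ) + (2:ℝ)^(-k) ≤ (2:ℝ)^(j+1) := by
          push_cast; nlinarith [h2]
        have bS := mQ_B h1' h2' (mem_dyadic_eq hq1') (mem_dyadic_eq hp2e)
        rw [hsib]
        linarith [bI.2, bS.1]
  -- Case C : the interval [0, 2^(i+1))
  · subst hn0
    have hki' : k = -((i:ℤ)+1) := by omega
    subst hki'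
    have upper := (mQ_Z i).2
    have lower0 := (mQ_Z i).1
    have hsib : sib (-((i:ℤ)+1), (0:ℤ)) = (-((i:ℤ)+1), (1:ℤ)) := by norm_num [sib]
    rw [hsib]
    have lower := (mQ_blk (i+1)).1
    have hcast : (-(((i+1:ℕ)):ℤ)) = -((i:ℤ)+1) := by push_cast; ring
    rw [hcast] at lower
    have haje := aj_pos (i+1)
    linarith


lemma dj_cube (j : ℕ) : dj j = aj j ^ 3 := rfl

theorem notbal :
    ¬ (∃ C : ℝ, 1 ≤ C ∧ ∀ I : ℤ × ℤ,
      mQ mu (pa I) ≤ C * mQ mu I ∧ mQ mu I ≤ C * mQ mu (pa I)) := by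
  rintro ⟨C, hC1, hbal⟩
  obtain ⟨m, hm⟩ := pow_unbounded_of_one_lt C (by norm_num : (1:ℝ) < 2)
  set j : ℕ := m + 1 with hjdef
  set k : ℤ := 1 - (j:ℤ) with hkdef
  have hTm : (2:ℝ)^(-k) = (2:ℝ)^(m:ℕ) := by
    rw [← zpow_natCast (2:ℝ) m]
    congr 1
    omega
  have hT := Tpos k
  have hq1 : (2:ℝ)^j = ((2:ℤ):ℝ) * (2:ℝ)^(-k) := by
    rw [hTm, hjdef, pow_succ]; push_cast; ring
  have hq2 : p2 j = ((3:ℤ):ℝ) * (2:ℝ)^(-k) := by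
    unfold p2; rw [hTm, hjdef, pow_succ]; push_cast; ring
  have h2j1 : (2:ℝ)^(j+1) = 4 * (2:ℝ)^(-k) := by
    rw [pow_succ, hq1]; push_cast; ring
  have h1 : (2:ℝ)^j ≤ (2:ℝ)^(-k)*(((2:ℤ)):ℝ) := by
    rw [hq1]; exact le_of_eq (by ring)
  have h2 : (2:ℝ)^(-k)*(((2:ℤ)):ℝ) + (2:ℝ)^(-k) ≤ (2:ℝ)^(j+1) := by
    rw [h2j1]; push_cast; linarith
  have bI := mQ_B h1 h2 (mem_dyadic_eq hq1) (mem_dyadic_eq hq2)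
  have blkb := (mQ_blk j).1
  have hpa : pa (k, (2:ℤ)) = (-(j:ℤ), (1:ℤ)) := by
    unfold pa
    have e1 : (k, (2:ℤ)).1 - 1 = -(j:ℤ) := by omega
    have e2 : ((k, (2:ℤ)).2 : ℤ) / 2 = 1 := by norm_num
    rw [e1, e2]
  have hbal1 := (hbal (k, 2)).1
  rw [hpa] at hbal1
  -- assemble the contradiction
  have ha := aj_pos j
  have haT : aj j * (2:ℝ)^(-k) = 1/2 := by
    rw [hTm]
    unfold aj
    rw [hjdef, pow_succ]
    have : (0:ℝ) < (2:ℝ)^(m:ℕ) := by positivity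
    field_simp
  have hCT : C ≤ (2:ℝ)^(-k) := by rw [hTm]; linarith
  have s1 : aj j / 2 ≤ C * mQ mu (k, 2) := le_trans blkb hbal1
  have s2 : C * mQ mu (k, 2) ≤ C * (dj j * (2:ℝ)^(-k)/2) :=
    mul_le_mul_of_nonneg_left bI.2 (by linarith)
  have s3 : C * (dj j * (2:ℝ)^(-k)/2) ≤ (2:ℝ)^(-k) * (dj j * (2:ℝ)^(-k)/2) :=
    mul_le_mul_of_nonneg_right hCT (by have := dj_pos j; positivity)
  have s4 : (2:ℝ)^(-k) * (dj j * (2:ℝ)^(-k)/2) = aj j / 8 := by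
    rw [dj_cube]
    have expand : (2:ℝ)^(-k) * (aj j^3 * (2:ℝ)^(-k)/2) =
        aj j * (aj j * (2:ℝ)^(-k))^2 / 2 := by ring
    rw [expand, haT]
    ring
  rw [s4] at s3
  linarith


end Stmt1Construction

/-- There exists a Borel measure on ℝ, positive and finite on all dyadic
intervals, that is sibling balanced but not balanced. -/
theorem stmt1 :
    ∃ μ : Measure ℝ, GoodMeasure μ ∧ (∃ K : ℝ, SibBalanced μ K) ∧
      ¬ (∃ C : ℝ, 1 ≤ C ∧ Balanced μ C) := by
  exact ⟨mu, good, ⟨100, sibbal⟩, notbal⟩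

end Dyadic
end
end

section
/- Let μ be a locally finite Borel measure on ℝ with 0 < μ(I) < ∞ for every I ∈ 𝒟, and let 1 < p < ∞. There exist constants C₁, C₂ > 0 depending only on p such that: for every b ∈ BMO(μ) with ‖b‖_{BMO(μ)} > 0 and every δ with 0 < δ < C₁·min{1, p−1}/‖b‖_{BMO(μ)}, the weight e^{δb} belongs to Â_p(μ) with [e^{δb}]_{Â_p(μ)} ≤ C₂. -/
open MeasureTheory Set

noncomputable section

namespace Dyadic

lemma two_zpow_pos (k : ℤ) : (0:ℝ) < 2 ^ k := zpow_pos (by norm_num) _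

lemma mem_dint {x : ℝ} {I : ℤ × ℤ} : x ∈ dint I ↔ ⌊(2:ℝ) ^ I.1 * x⌋ = I.2 := by
  obtain ⟨k, n⟩ := I
  have h : (0:ℝ) < 2 ^ k := two_zpow_pos k
  simp only [dint, Set.mem_Ico, Int.floor_eq_iff]
  rw [zpow_neg]
  constructor
  · rintro ⟨h1, h2⟩
    refine ⟨?_, ?_⟩
    · calc ((n:ℝ)) = 2^k * ((2^k)⁻¹ * n) := by field_simp
        _ ≤ 2^k * x := by nlinarith
    · calc (2:ℝ)^k * x < 2^k * ((2^k)⁻¹ * (n+1)) := by nlinarith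
        _ = n + 1 := by field_simp
  · rintro ⟨h1, h2⟩
    have hinv : (2:ℝ)^k * ((2:ℝ)^k)⁻¹ = 1 := mul_inv_cancel₀ (ne_of_gt h)
    have hi : (0:ℝ) < ((2:ℝ)^k)⁻¹ := inv_pos.2 h
    have hx : ((2:ℝ)^k)⁻¹ * ((2:ℝ)^k * x) = x := by field_simp
    constructor
    · have := mul_le_mul_of_nonneg_left h1 (le_of_lt hi)
      rw [hx] at this; linarith
    · have := mul_lt_mul_of_pos_left h2 hi
      rw [hx] at this; linarith

lemma dint_nonempty (I : ℤ × ℤ) : (dint I).Nonempty := by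
  refine ⟨(2:ℝ) ^ (-I.1) * I.2, ?_⟩
  have h : (0:ℝ) < 2 ^ (-I.1) := two_zpow_pos _
  exact ⟨le_refl _, by nlinarith⟩

lemma floor_half (y : ℝ) : ⌊y / 2⌋ = ⌊y⌋ / 2 := by
  have h1 : (⌊y⌋ : ℝ) ≤ y := Int.floor_le y
  have h2 : y < ⌊y⌋ + 1 := Int.lt_floor_add_one y
  have h3 : ⌊y⌋ = 2 * (⌊y⌋ / 2) + ⌊y⌋ % 2 := (Int.mul_ediv_add_emod _ 2).symm
  have h4 : 0 ≤ ⌊y⌋ % 2 := Int.emod_nonneg _ (by norm_num)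
  have h5 : ⌊y⌋ % 2 < 2 := Int.emod_lt_of_pos _ (by norm_num)
  rw [Int.floor_eq_iff]
  have h4' : (0:ℝ) ≤ ((⌊y⌋ % 2 : ℤ):ℝ) := by exact_mod_cast h4
  have h5' : ((⌊y⌋ % 2 : ℤ):ℝ) ≤ 1 := by
    have : ⌊y⌋ % 2 ≤ 1 := by omega
    exact_mod_cast this
  constructor
  · have : ((2 * (⌊y⌋ / 2) + ⌊y⌋ % 2 : ℤ) : ℝ) ≤ y := by rw [← h3]; exact h1
    push_cast at this ⊢
    linarith
  · have : y < ((2 * (⌊y⌋ / 2) + ⌊y⌋ % 2 : ℤ) : ℝ) + 1 := by rw [← h3]; exact h2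
    push_cast at this ⊢
    linarith

lemma dint_subset_pa (I : ℤ × ℤ) : dint I ⊆ dint (pa I) := by
  intro x hx
  rw [mem_dint] at hx ⊢
  show ⌊(2:ℝ) ^ (I.1 - 1) * x⌋ = I.2 / 2
  have : (2:ℝ) ^ (I.1 - 1) * x = ((2:ℝ) ^ I.1 * x) / 2 := by
    rw [zpow_sub₀ (by norm_num : (2:ℝ) ≠ 0)]
    ring
  rw [this, floor_half, hx]

lemma eq_of_mem_same_level {x : ℝ} {I J : ℤ × ℤ} (h : I.1 = J.1)
    (hI : x ∈ dint I) (hJ : x ∈ dint J) : I = J := by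
  rw [mem_dint] at hI hJ
  have : I.2 = J.2 := by rw [← hI, ← hJ, h]
  exact Prod.ext h this

lemma pa_iter_level (m : ℕ) (I : ℤ × ℤ) : (pa^[m] I).1 = I.1 - m := by
  induction m generalizing I with
  | zero => simp
  | succ n ih =>
    rw [Function.iterate_succ_apply, ih]
    simp [pa]
    ring

lemma dint_subset_pa_iter (m : ℕ) (I : ℤ × ℤ) : dint I ⊆ dint (pa^[m] I) := by
  induction m generalizing I with
  | zero => simp
  | succ n ih =>
    rw [Function.iterate_succ_apply]
    exact (dint_subset_pa I).trans (ih (pa I))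

lemma subset_of_level_le {I J : ℤ × ℤ} (h : I.1 ≤ J.1)
    (hne : (dint J ∩ dint I).Nonempty) : dint J ⊆ dint I := by
  obtain ⟨x, hxJ, hxI⟩ := hne
  set m := (J.1 - I.1).toNat with hm
  have hK : (pa^[m] J).1 = I.1 := by
    rw [pa_iter_level, hm, Int.toNat_of_nonneg (by omega)]; ring
  have hsub : dint J ⊆ dint (pa^[m] J) := dint_subset_pa_iter m J
  have : pa^[m] J = I := eq_of_mem_same_level hK (hsub hxJ) hxI
  rw [← this]; exact hsub

lemma level_le_of_subset {I J : ℤ × ℤ} (h : dint J ⊆ dint I) : I.1 ≤ J.1 := by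
  have hJ : (2:ℝ)^(-J.1) * J.2 < (2:ℝ)^(-J.1) * (J.2 + 1) := by
    have := two_zpow_pos (-J.1); nlinarith
  rw [dint, dint, Set.Ico_subset_Ico_iff hJ] at h
  obtain ⟨h1, h2⟩ := h
  have hlen : (2:ℝ)^(-J.1) ≤ (2:ℝ)^(-I.1) := by nlinarith
  have := (zpow_le_zpow_iff_right₀ (by norm_num : (1:ℝ) < 2)).1 hlen
  omega

lemma dint_inj {I J : ℤ × ℤ} (h : dint I = dint J) : I = J := by
  have h1 : I.1 = J.1 :=
    le_antisymm (level_le_of_subset h.ge) (level_le_of_subset h.le)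
  obtain ⟨x, hx⟩ := dint_nonempty I
  exact eq_of_mem_same_level h1 hx (h ▸ hx)

lemma nested_or_disjoint (I J : ℤ × ℤ) :
    dint I ⊆ dint J ∨ dint J ⊆ dint I ∨ Disjoint (dint I) (dint J) := by
  by_cases hd : Disjoint (dint I) (dint J)
  · exact Or.inr (Or.inr hd)
  · rw [Set.not_disjoint_iff] at hd
    obtain ⟨x, hxI, hxJ⟩ := hd
    rcases le_total I.1 J.1 with h | h
    · exact Or.inr (Or.inl (subset_of_level_le h ⟨x, hxJ, hxI⟩))
    · exact Or.inl (subset_of_level_le h ⟨x, hxI, hxJ⟩)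

lemma measurableSet_dint (I : ℤ × ℤ) : MeasurableSet (dint I) := measurableSet_Ico

lemma dint_diam {I : ℤ × ℤ} {x y : ℝ} (hx : x ∈ dint I) (hy : y ∈ dint I) :
    |x - y| ≤ (2:ℝ)^(-I.1) := by
  obtain ⟨hx1, hx2⟩ := hx
  obtain ⟨hy1, hy2⟩ := hy
  rw [abs_le]
  constructor <;> nlinarith [two_zpow_pos (-I.1)]

lemma exists_small_level {ε : ℝ} (hε : 0 < ε) : ∃ k : ℕ, (2:ℝ)^(-(k:ℤ)) ≤ ε := by
  obtain ⟨n, hn⟩ := exists_pow_lt_of_lt_one hε (by norm_num : (1:ℝ)/2 < 1)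
  refine ⟨n, le_of_lt ?_⟩
  calc (2:ℝ)^(-(n:ℤ)) = ((1:ℝ)/2)^n := by
        rw [zpow_neg, one_div, inv_pow, zpow_natCast]
    _ < ε := hn


lemma exists_maximal {P : ℤ × ℤ → Prop} {l : ℤ} (hlb : ∀ J, P J → l ≤ J.1)
    {I : ℤ × ℤ} (hI : P I) :
    ∃ K, P K ∧ dint I ⊆ dint K ∧ ∀ J, P J → dint K ⊆ dint J → J = K := by
  obtain ⟨m, ⟨J₀, hJ₀, hJ₀l, hJ₀s⟩, hmin⟩ :=
    Int.exists_least_of_bdd (P := fun m => ∃ J, P J ∧ J.1 = m ∧ dint I ⊆ dint J)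
      ⟨l, fun z ⟨J, hJ, hJl, _⟩ => hJl ▸ hlb J hJ⟩ ⟨I.1, I, hI, rfl, subset_refl _⟩
  refine ⟨J₀, hJ₀, hJ₀s, fun J hJ hsub => ?_⟩
  have h1 : J.1 ≤ J₀.1 := level_le_of_subset hsub
  have h2 : m ≤ J.1 := hmin J.1 ⟨J, hJ, rfl, hJ₀s.trans hsub⟩
  have hlev : J₀.1 = J.1 := by omega
  obtain ⟨x, hx⟩ := dint_nonempty J₀
  exact eq_of_mem_same_level hlev.symm (hsub hx) hx

/-- The Vitali family of dyadic intervals. -/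
def vfam (μ : Measure ℝ) : VitaliFamily μ where
  setsAt x := {a | ∃ I, x ∈ dint I ∧ a = dint I}
  measurableSet x a ha := by obtain ⟨I, _, rfl⟩ := ha; exact measurableSet_dint I
  nonempty_interior x a ha := by
    obtain ⟨I, _, rfl⟩ := ha
    rw [dint, interior_Ico]
    have := two_zpow_pos (-I.1)
    exact Set.nonempty_Ioo.2 (by nlinarith)
  nontrivial x ε hε := by
    obtain ⟨k, hk⟩ := exists_small_level hε
    refine ⟨dint ((k:ℤ), ⌊(2:ℝ)^(k:ℤ) * x⌋), ⟨_, mem_dint.2 rfl, rfl⟩, fun y hy => ?_⟩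
    rw [Metric.mem_closedBall, Real.dist_eq]
    exact le_trans (dint_diam hy (mem_dint.2 rfl)) hk
  covering := by
    intro s f hf hf'
    classical
    set G : Set (ℤ × ℤ) := {I | 0 ≤ I.1 ∧ ∃ x ∈ s, dint I ∈ f x} with hG
    set M : Set (ℤ × ℤ) := {I | I ∈ G ∧ ∀ J ∈ G, dint I ⊆ dint J → J = I} with hM
    have hmax : ∀ I ∈ G, ∃ K ∈ M, dint I ⊆ dint K := by
      intro I hI
      obtain ⟨K, hK, hKs, hKm⟩ := exists_maximal (l := 0) (fun J hJ => hJ.1) hI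
      exact ⟨K, ⟨hK, fun J hJ hs => hKm J hJ hs⟩, hKs⟩
    have hcov : ∀ x ∈ s, ∃ K ∈ M, x ∈ dint K := by
      intro x hx
      obtain ⟨a, haf, hab⟩ := hf' x hx (1/4) (by norm_num)
      obtain ⟨I, hxI, rfl⟩ := hf x hx haf
      have hI0 : 0 ≤ I.1 := by
        have h2 : (0:ℝ) < 2 ^ (-I.1) := two_zpow_pos _
        have p1 : (2:ℝ)^(-I.1) * I.2 ∈ dint I := ⟨le_refl _, by nlinarith⟩
        have p2 : (2:ℝ)^(-I.1) * (I.2 + 1/2) ∈ dint I := ⟨by nlinarith, by nlinarith⟩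
        have q1 := hab p1
        have q2 := hab p2
        rw [Metric.mem_closedBall, Real.dist_eq] at q1 q2
        have hlen : (2:ℝ)^(-I.1) ≤ (2:ℝ)^(0:ℤ) := by
          rw [abs_le] at q1 q2
          have : (2:ℝ)^(-I.1) * (1/2) ≤ 1/2 := by nlinarith
          norm_num at this ⊢
          linarith
        have := (zpow_le_zpow_iff_right₀ (by norm_num : (1:ℝ) < 2)).1 hlen
        omega
      have hIG : I ∈ G := ⟨hI0, x, hx, haf⟩
      obtain ⟨K, hK, hKs⟩ := hmax I hIG
      exact ⟨K, hK, hKs hxI⟩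
    let xc : ℤ × ℤ → ℝ := fun I => if h : ∃ x, x ∈ s ∧ dint I ∈ f x then h.choose else 0
    have hsel : ∀ I ∈ M, ∃ x, x ∈ s ∧ dint I ∈ f x := by
      rintro I ⟨⟨_, x, hx, hfx⟩, _⟩; exact ⟨x, hx, hfx⟩
    have hxc : ∀ I ∈ M, xc I ∈ s ∧ dint I ∈ f (xc I) := by
      intro I hI
      have h := hsel I hI
      simp only [xc, dif_pos h]
      exact h.choose_spec
    refine ⟨(fun I => (xc I, dint I)) '' M, ?_, ?_, ?_, ?_⟩
    · rintro p ⟨I, hI, rfl⟩; exact (hxc I hI).1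
    · rintro p ⟨I, hI, rfl⟩ q ⟨J, hJ, rfl⟩ hne
      have hIJ : I ≠ J := fun h => hne (by rw [h])
      rcases nested_or_disjoint I J with h | h | h
      · exact absurd (hI.2 J hJ.1 h) (Ne.symm hIJ)
      · exact absurd (hJ.2 I hI.1 h) hIJ
      · exact h
    · rintro p ⟨I, hI, rfl⟩; exact (hxc I hI).2
    · have : s ⊆ ⋃ p ∈ (fun I => (xc I, dint I)) '' M, (p : ℝ × Set ℝ).2 := by
        intro x hx
        obtain ⟨K, hK, hxK⟩ := hcov x hx
        exact Set.mem_biUnion ⟨K, hK, rfl⟩ hxK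
      rw [Set.diff_eq_empty.2 this]
      exact measure_empty



lemma avg_eq_setAverage (μ : Measure ℝ) (I : ℤ × ℤ) (f : ℝ → ℝ) :
    avg μ I f = ⨍ y in dint I, f y ∂μ := by
  rw [setAverage_eq, smul_eq_mul]; rfl

lemma ae_tendsto_avg {μ : Measure ℝ} [IsLocallyFiniteMeasure μ] {b : ℝ → ℝ}
    (hb : LocallyIntegrable b μ) :
    ∀ᵐ x ∂μ, Filter.Tendsto (fun k : ℕ => avg μ ((k:ℤ), ⌊(2:ℝ)^(k:ℤ) * x⌋) b)
      Filter.atTop (nhds (b x)) := by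
  filter_upwards [(vfam μ).ae_tendsto_average hb] with x hx
  have hseq : Filter.Tendsto (fun k : ℕ => dint ((k:ℤ), ⌊(2:ℝ)^(k:ℤ) * x⌋))
      Filter.atTop ((vfam μ).filterAt x) := by
    rw [VitaliFamily.tendsto_filterAt_iff]
    constructor
    · exact Filter.Eventually.of_forall fun k => ⟨_, mem_dint.2 rfl, rfl⟩
    · intro ε hε
      obtain ⟨N, hN⟩ := exists_small_level hε
      filter_upwards [Filter.eventually_ge_atTop N] with k hk y hy
      rw [Metric.mem_closedBall, Real.dist_eq]
      refine le_trans (dint_diam hy (mem_dint.2 rfl)) (le_trans ?_ hN)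
      exact zpow_le_zpow_right₀ (by norm_num) (by omega)
  have h2 := hx.comp hseq
  exact h2.congr fun k => (avg_eq_setAverage μ _ b).symm




variable {μ : Measure ℝ} {b : ℝ → ℝ}

lemma muR_pos (hμ : GoodMeasure μ) (I : ℤ × ℤ) : 0 < muR μ I :=
  ENNReal.toReal_pos (hμ I).1.ne' (hμ I).2.ne

lemma muR_eq_s9 (hμ : GoodMeasure μ) (I : ℤ × ℤ) : ENNReal.ofReal (muR μ I) = μ (dint I) :=
  ENNReal.ofReal_toReal (hμ I).2.ne

lemma intOn (hb : LocallyIntegrable b μ) (I : ℤ × ℤ) : IntegrableOn b (dint I) μ :=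
  (hb.integrableOn_isCompact isCompact_Icc).mono_set Set.Ico_subset_Icc_self

lemma intOn_abs_sub (hμ : GoodMeasure μ) (hb : LocallyIntegrable b μ) (c : ℝ) (I : ℤ × ℤ) :
    IntegrableOn (fun x => |b x - c|) (dint I) μ := by
  have : IntegrableOn (fun x => b x - c) (dint I) μ :=
    (intOn hb I).sub (integrableOn_const (hμ I).2.ne)
  exact this.abs

lemma abs_avg_sub_le (hμ : GoodMeasure μ) (hb : LocallyIntegrable b μ) (c : ℝ) (I : ℤ × ℤ) :
    |avg μ I b - c| ≤ (muR μ I)⁻¹ * ∫ x in dint I, |b x - c| ∂μ := by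
  have hpos := muR_pos hμ I
  have h1 : avg μ I b - c = (muR μ I)⁻¹ * ∫ x in dint I, (b x - c) ∂μ := by
    rw [integral_sub (intOn hb I) (integrableOn_const (hμ I).2.ne),
      setIntegral_const, smul_eq_mul, mul_sub, avg]
    congr 1
    have : (muR μ I)⁻¹ * (muR μ I * c) = c := by field_simp
    exact this.symm
  rw [h1, abs_mul, abs_of_pos (inv_pos.2 hpos)]
  apply mul_le_mul_of_nonneg_left _ (le_of_lt (inv_pos.2 hpos))
  calc |∫ x in dint I, (b x - c) ∂μ| ≤ ∫ x in dint I, |b x - c| ∂μ := by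
        simpa [Real.norm_eq_abs] using
          norm_integral_le_integral_norm (μ := μ.restrict (dint I)) (fun x => b x - c)

lemma abs_avg_sub_avg_pa (hμ : GoodMeasure μ) (hb : LocallyIntegrable b μ) (I : ℤ × ℤ) :
    |avg μ I b - avg μ (pa I) b| ≤ bmoQuot μ b I :=
  abs_avg_sub_le hμ hb _ I

lemma setint_abs_sub_avg_le (hμ : GoodMeasure μ) (hb : LocallyIntegrable b μ) {B : ℝ}
    (hquot : ∀ I, bmoQuot μ b I ≤ B) (I : ℤ × ℤ) :
    ∫ x in dint I, |b x - avg μ I b| ∂μ ≤ 2 * B * muR μ I := by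
  have hpos := muR_pos hμ I
  have h1 : ∀ x, |b x - avg μ I b| ≤ |b x - avg μ (pa I) b| + |avg μ I b - avg μ (pa I) b| := by
    intro x
    calc |b x - avg μ I b| = |(b x - avg μ (pa I) b) - (avg μ I b - avg μ (pa I) b)| := by
          ring_nf
      _ ≤ _ := abs_sub _ _
  have h2 : ∫ x in dint I, |b x - avg μ I b| ∂μ ≤
      ∫ x in dint I, (|b x - avg μ (pa I) b| + |avg μ I b - avg μ (pa I) b|) ∂μ := by
    apply integral_mono (intOn_abs_sub hμ hb _ I)
      ((intOn_abs_sub hμ hb _ I).add (integrableOn_const (hμ I).2.ne)) h1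
  have h3 : ∫ x in dint I, (|b x - avg μ (pa I) b| + |avg μ I b - avg μ (pa I) b|) ∂μ =
      (∫ x in dint I, |b x - avg μ (pa I) b| ∂μ) + |avg μ I b - avg μ (pa I) b| * muR μ I := by
    rw [integral_add (intOn_abs_sub hμ hb _ I) (integrableOn_const (hμ I).2.ne),
      setIntegral_const, smul_eq_mul, _root_.mul_comm]
    rfl
  have h4 : ∫ x in dint I, |b x - avg μ (pa I) b| ∂μ ≤ B * muR μ I := by
    have := hquot I
    rw [bmoQuot] at this
    calc ∫ x in dint I, |b x - avg μ (pa I) b| ∂μ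
        = muR μ I * ((muR μ I)⁻¹ * ∫ x in dint I, |b x - avg μ (pa I) b| ∂μ) := by
          field_simp
      _ ≤ muR μ I * B := by
          apply mul_le_mul_of_nonneg_left this (le_of_lt hpos)
      _ = B * muR μ I := _root_.mul_comm _ _
  have h5 : |avg μ I b - avg μ (pa I) b| ≤ B :=
    le_trans (abs_avg_sub_avg_pa hμ hb I) (hquot I)
  nlinarith [abs_nonneg (avg μ I b - avg μ (pa I) b)]


open scoped ENNReal

def eps0 : ℝ := Real.log (3/2) / 5

lemma eps0_pos : 0 < eps0 := by
  have : (0:ℝ) < Real.log (3/2) := Real.log_pos (by norm_num)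
  unfold eps0; linarith

lemma exp_le_32 {y : ℝ} (hy : y ≤ 5 * eps0) : Real.exp y ≤ 3/2 := by
  have h5 : 5 * eps0 = Real.log (3/2) := by unfold eps0; ring
  calc Real.exp y ≤ Real.exp (Real.log (3/2)) := Real.exp_le_exp.2 (h5 ▸ hy)
    _ = 3/2 := Real.exp_log (by norm_num)

lemma min_mul_helper {a e M : ℝ} (ha : 0 ≤ a) (haa : a ≤ 3/2) (he : 0 ≤ e) (hM : 0 ≤ M) :
    min (a * e) M ≤ (3/2) * min e M := by
  rcases le_total e M with h | h
  · rw [min_eq_left h]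
    calc min (a*e) M ≤ a*e := min_le_left _ _
      _ ≤ (3/2)*e := by nlinarith
  · rw [min_eq_right h]
    calc min (a*e) M ≤ M := min_le_right _ _
      _ ≤ (3/2)*M := by nlinarith

lemma jn_lintegral (hμ : GoodMeasure μ) [IsLocallyFiniteMeasure μ]
    (hb : LocallyIntegrable b μ) {B tt : ℝ} (hB : 0 < B)
    (hquot : ∀ I, bmoQuot μ b I ≤ B) (ht : |tt| * B ≤ eps0) (I : ℤ × ℤ) :
    ∫⁻ x in dint I, ENNReal.ofReal (Real.exp (tt * (b x - avg μ I b))) ∂μ ≤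
      ENNReal.ofReal 6 * μ (dint I) := by
  classical
  set c : ℤ × ℤ → ℝ := fun J => avg μ J b with hc
  have hbm : AEMeasurable b μ := hb.aestronglyMeasurable.aemeasurable
  -- the truncated exponential integrals
  set F : ℤ × ℤ → ℕ → ℝ≥0∞ := fun J M =>
    ∫⁻ x in dint J, ENNReal.ofReal (min (Real.exp (tt * (b x - c J))) M) ∂μ with hF
  set S : ℕ → ℝ≥0∞ := fun M => ⨆ J, (μ (dint J))⁻¹ * F J M with hS
  have hSle : ∀ M : ℕ, S M ≤ ENNReal.ofReal M := by
    intro M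
    apply iSup_le
    intro J
    have h1 : F J M ≤ ENNReal.ofReal M * μ (dint J) := by
      calc F J M ≤ ∫⁻ _ in dint J, ENNReal.ofReal M ∂μ :=
            lintegral_mono fun x => ENNReal.ofReal_le_ofReal (min_le_right _ _)
        _ = ENNReal.ofReal M * μ (dint J) := setLIntegral_const _ _
    calc (μ (dint J))⁻¹ * F J M ≤ (μ (dint J))⁻¹ * (ENNReal.ofReal M * μ (dint J)) :=
          mul_le_mul_right h1 _
      _ = ENNReal.ofReal M * ((μ (dint J))⁻¹ * μ (dint J)) := by ring
      _ = ENNReal.ofReal M := by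
          rw [ENNReal.inv_mul_cancel (hμ J).1.ne' (hμ J).2.ne, _root_.mul_one]
  have hSfin : ∀ M : ℕ, S M ≠ ⊤ := fun M => (lt_of_le_of_lt (hSle M) ENNReal.ofReal_lt_top).ne
  -- the recursion step
  have hrec : ∀ (M : ℕ) (I : ℤ × ℤ),
      (μ (dint I))⁻¹ * F I M ≤ ENNReal.ofReal (3/2) + ENNReal.ofReal (3/4) * S M := by
    intro M K
    set g : ℝ → ℝ≥0∞ := fun x => ENNReal.ofReal (min (Real.exp (tt * (b x - c K))) M) with hg
    set St : Set (ℤ × ℤ) := {J | K.1 < J.1 ∧ dint J ⊆ dint K ∧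
      4*B*muR μ J < ∫ x in dint J, |b x - c K| ∂μ} with hStdef
    set Mx : Set (ℤ × ℤ) := {J | J ∈ St ∧ ∀ J' ∈ St, dint J ⊆ dint J' → J' = J} with hMxdef
    have hmaxx : ∀ J ∈ St, ∃ J' ∈ Mx, dint J ⊆ dint J' := by
      intro J hJ
      obtain ⟨J', h1, h2, h3⟩ := exists_maximal (l := K.1 + 1) (fun J hJ => hJ.1) hJ
      exact ⟨J', ⟨h1, h3⟩, h2⟩
    have hpd : Mx.PairwiseDisjoint dint := by
      intro J hJ J' hJ' hne
      rcases nested_or_disjoint J J' with h | h | h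
      · exact absurd (hJ.2 J' hJ'.1 h) (Ne.symm hne)
      · exact absurd (hJ'.2 J hJ.1 h) hne
      · exact h
    set A : Set ℝ := ⋃ J ∈ Mx, dint J with hA
    have hAsub : A ⊆ dint K := Set.iUnion₂_subset fun J hJ => hJ.1.2.1
    have hcnt : Mx.Countable := Mx.to_countable
    haveI : Countable ↥Mx := hcnt.to_subtype
    have hAmeas : MeasurableSet A :=
      MeasurableSet.biUnion hcnt fun J _ => measurableSet_dint J
    have hpd' : Pairwise (Function.onFun Disjoint (fun J : Mx => dint (J:ℤ×ℤ))) :=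
      fun J J' hne => hpd J.2 J'.2 (fun h => hne (Subtype.ext h))
    have hunst : ∀ J, K.1 < J.1 → dint J ⊆ dint K → J ∉ St →
        (muR μ J)⁻¹ * ∫ x in dint J, |b x - c K| ∂μ ≤ 4*B := by
      intro J h1 h2 h3
      have h4 : ∫ x in dint J, |b x - c K| ∂μ ≤ 4*B*muR μ J := by
        by_contra hcon
        exact h3 ⟨h1, h2, lt_of_not_ge hcon⟩
      have hpos := muR_pos hμ J
      calc (muR μ J)⁻¹ * ∫ x in dint J, |b x - c K| ∂μ
          ≤ (muR μ J)⁻¹ * (4*B*muR μ J) :=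
            mul_le_mul_of_nonneg_left h4 (inv_pos.2 hpos).le
        _ = 4*B := by field_simp
    -- measure of the stopped region
    have hmesA : μ A ≤ ENNReal.ofReal (1/2) * μ (dint K) := by
      have h1 : μ A = ∑' (J : Mx), μ (dint (J:ℤ×ℤ)) :=
        measure_biUnion hcnt hpd fun J _ => measurableSet_dint J
      have h2 : ∀ J : Mx, μ (dint (J:ℤ×ℤ)) ≤
          ENNReal.ofReal (4*B)⁻¹ * ∫⁻ x in dint (J:ℤ×ℤ), ENNReal.ofReal |b x - c K| ∂μ := by
        intro J
        obtain ⟨h3, h4, h5⟩ := J.2.1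
        have hint := intOn_abs_sub hμ hb (c K) (J:ℤ×ℤ)
        have h6 : muR μ (J:ℤ×ℤ) ≤ (4*B)⁻¹ * ∫ x in dint (J:ℤ×ℤ), |b x - c K| ∂μ := by
          have h4B : (0:ℝ) < 4*B := by linarith
          have := mul_le_mul_of_nonneg_left h5.le (inv_pos.2 h4B).le
          calc muR μ (J:ℤ×ℤ) = (4*B)⁻¹ * (4*B*muR μ (J:ℤ×ℤ)) := by field_simp
            _ ≤ _ := this
        calc μ (dint (J:ℤ×ℤ)) = ENNReal.ofReal (muR μ (J:ℤ×ℤ)) := (muR_eq_s9 hμ _).symm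
          _ ≤ ENNReal.ofReal ((4*B)⁻¹ * ∫ x in dint (J:ℤ×ℤ), |b x - c K| ∂μ) :=
              ENNReal.ofReal_le_ofReal h6
          _ = ENNReal.ofReal (4*B)⁻¹ *
              ENNReal.ofReal (∫ x in dint (J:ℤ×ℤ), |b x - c K| ∂μ) :=
              ENNReal.ofReal_mul (by positivity)
          _ = ENNReal.ofReal (4*B)⁻¹ *
              ∫⁻ x in dint (J:ℤ×ℤ), ENNReal.ofReal |b x - c K| ∂μ := by
              rw [ofReal_integral_eq_lintegral_ofReal hint
                (Filter.Eventually.of_forall fun x => abs_nonneg _)]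
      have h8 : (∑' (J : Mx), ∫⁻ x in dint (J:ℤ×ℤ), ENNReal.ofReal |b x - c K| ∂μ)
          = ∫⁻ x in A, ENNReal.ofReal |b x - c K| ∂μ := by
        rw [hA, Set.biUnion_eq_iUnion,
          lintegral_iUnion (fun J => measurableSet_dint _) hpd']
      have h10 : ∫⁻ x in dint K, ENNReal.ofReal |b x - c K| ∂μ ≤
          ENNReal.ofReal (2*B*muR μ K) := by
        rw [← ofReal_integral_eq_lintegral_ofReal (intOn_abs_sub hμ hb _ K)
          (Filter.Eventually.of_forall fun x => abs_nonneg _)]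
        exact ENNReal.ofReal_le_ofReal (setint_abs_sub_avg_le hμ hb hquot K)
      calc μ A = ∑' (J : Mx), μ (dint (J:ℤ×ℤ)) := h1
        _ ≤ ∑' (J : Mx), ENNReal.ofReal (4*B)⁻¹ *
            ∫⁻ x in dint (J:ℤ×ℤ), ENNReal.ofReal |b x - c K| ∂μ := ENNReal.tsum_le_tsum h2
        _ = ENNReal.ofReal (4*B)⁻¹ *
            ∑' (J : Mx), ∫⁻ x in dint (J:ℤ×ℤ), ENNReal.ofReal |b x - c K| ∂μ :=
            ENNReal.tsum_mul_left
        _ = ENNReal.ofReal (4*B)⁻¹ * ∫⁻ x in A, ENNReal.ofReal |b x - c K| ∂μ := by rw [h8]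
        _ ≤ ENNReal.ofReal (4*B)⁻¹ * ∫⁻ x in dint K, ENNReal.ofReal |b x - c K| ∂μ :=
            mul_le_mul_right (lintegral_mono_set hAsub) _
        _ ≤ ENNReal.ofReal (4*B)⁻¹ * ENNReal.ofReal (2*B*muR μ K) := mul_le_mul_right h10 _
        _ = ENNReal.ofReal ((4*B)⁻¹ * (2*B*muR μ K)) :=
            (ENNReal.ofReal_mul (by positivity)).symm
        _ = ENNReal.ofReal ((1/2) * muR μ K) := by
            congr 1
            field_simp
            ring
        _ = ENNReal.ofReal (1/2) * ENNReal.ofReal (muR μ K) :=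
            ENNReal.ofReal_mul (by norm_num)
        _ = ENNReal.ofReal (1/2) * μ (dint K) := by rw [muR_eq_s9 hμ]
    -- averages on maximal cubes
    have hc5 : ∀ J ∈ Mx, |c J - c K| ≤ 5*B := by
      intro J hJ
      obtain ⟨⟨hlev, hsub, _⟩, hmaxJ⟩ := hJ
      have h1 : |c J - c (pa J)| ≤ B := le_trans (abs_avg_sub_avg_pa hμ hb J) (hquot J)
      have h2 : |c (pa J) - c K| ≤ 4*B := by
        have hplev : (pa J).1 = J.1 - 1 := rfl
        obtain ⟨x, hxJ⟩ := dint_nonempty J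
        have hxp : x ∈ dint (pa J) := dint_subset_pa J hxJ
        have hxK : x ∈ dint K := hsub hxJ
        rcases eq_or_lt_of_le (by omega : K.1 ≤ (pa J).1) with heq | hlt
        · have : pa J = K := eq_of_mem_same_level heq.symm hxp hxK
          rw [this]
          simp only [sub_self, abs_zero]
          positivity
        · have hpsub : dint (pa J) ⊆ dint K := subset_of_level_le hlt.le ⟨x, hxp, hxK⟩
          have hpnSt : pa J ∉ St := by
            intro hpSt
            have := hmaxJ (pa J) hpSt (dint_subset_pa J)
            have : (pa J).1 = J.1 := by rw [this]
            omega
          exact le_trans (abs_avg_sub_le hμ hb (c K) (pa J)) (hunst _ hlt hpsub hpnSt)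
      calc |c J - c K| ≤ |c J - c (pa J)| + |c (pa J) - c K| := abs_sub_le _ _ _
        _ ≤ 5*B := by linarith
    -- a.e. bound on the unstopped region
    have hae : ∀ᵐ x ∂μ, x ∈ dint K \ A → |b x - c K| ≤ 4*B := by
      filter_upwards [ae_tendsto_avg hb] with x hx hxUA
      obtain ⟨hxK, hxA⟩ := hxUA
      have hev : ∀ᶠ k : ℕ in Filter.atTop,
          |avg μ ((k:ℤ), ⌊(2:ℝ)^(k:ℤ)*x⌋) b - c K| ≤ 4*B := by
        filter_upwards [Filter.eventually_gt_atTop (K.1.toNat)] with k hk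
        set D : ℤ×ℤ := ((k:ℤ), ⌊(2:ℝ)^(k:ℤ)*x⌋) with hD
        have hxD : x ∈ dint D := mem_dint.2 rfl
        have hlev : K.1 < (k:ℤ) := by
          have h1 : K.1 ≤ (K.1.toNat : ℤ) := Int.self_le_toNat _
          have h2 : ((K.1.toNat : ℤ)) < (k:ℤ) := by exact_mod_cast hk
          omega
        have hDK : dint D ⊆ dint K := subset_of_level_le hlev.le ⟨x, hxD, hxK⟩
        have hDnSt : D ∉ St := by
          intro hDSt
          obtain ⟨J', hJ', hsubD⟩ := hmaxx D hDSt
          exact hxA (Set.mem_biUnion hJ' (hsubD hxD))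
        exact le_trans (abs_avg_sub_le hμ hb (c K) D) (hunst D hlev hDK hDnSt)
      have htend : Filter.Tendsto (fun k : ℕ => |avg μ ((k:ℤ), ⌊(2:ℝ)^(k:ℤ)*x⌋) b - c K|)
          Filter.atTop (nhds |b x - c K|) := (hx.sub tendsto_const_nhds).abs
      exact le_of_tendsto htend hev
    -- assemble
    have hsplit : F K M = (∫⁻ x in A, g x ∂μ) + ∫⁻ x in dint K \ A, g x ∂μ := by
      have h0 : F K M = ∫⁻ x in dint K, g x ∂μ := rfl
      rw [h0, ← lintegral_inter_add_diff g (dint K) hAmeas,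
        Set.inter_eq_self_of_subset_right hAsub]
    have hU : ∫⁻ x in dint K \ A, g x ∂μ ≤ ENNReal.ofReal (3/2) * μ (dint K) := by
      have hgb : ∀ᵐ x ∂(μ.restrict (dint K \ A)), g x ≤ ENNReal.ofReal (3/2) := by
        rw [ae_restrict_iff' ((measurableSet_dint K).diff hAmeas)]
        filter_upwards [hae] with x hx hmem
        have h1 : tt * (b x - c K) ≤ 5 * eps0 := by
          calc tt * (b x - c K) ≤ |tt * (b x - c K)| := le_abs_self _
            _ = |tt| * |b x - c K| := abs_mul _ _
            _ ≤ |tt| * (4*B) := mul_le_mul_of_nonneg_left (hx hmem) (abs_nonneg tt)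
            _ = 4 * (|tt| * B) := by ring
            _ ≤ 4 * eps0 := by nlinarith [abs_nonneg tt]
            _ ≤ 5 * eps0 := by nlinarith [eps0_pos]
        calc g x ≤ ENNReal.ofReal (Real.exp (tt * (b x - c K))) :=
              ENNReal.ofReal_le_ofReal (min_le_left _ _)
          _ ≤ ENNReal.ofReal (3/2) := ENNReal.ofReal_le_ofReal (exp_le_32 h1)
      calc ∫⁻ x in dint K \ A, g x ∂μ ≤ ∫⁻ _ in dint K \ A, ENNReal.ofReal (3/2) ∂μ :=
            lintegral_mono_ae hgb
        _ = ENNReal.ofReal (3/2) * μ (dint K \ A) := setLIntegral_const _ _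
        _ ≤ ENNReal.ofReal (3/2) * μ (dint K) :=
            mul_le_mul_right (measure_mono Set.diff_subset) _
    have hApart : ∫⁻ x in A, g x ∂μ ≤
        ENNReal.ofReal (3/2) * S M * (ENNReal.ofReal (1/2) * μ (dint K)) := by
      have hJbound : ∀ J : Mx, ∫⁻ x in dint (J:ℤ×ℤ), g x ∂μ ≤
          ENNReal.ofReal (3/2) * (μ (dint (J:ℤ×ℤ)) * S M) := by
        intro J
        have hMnn : (0:ℝ) ≤ (M:ℝ) := Nat.cast_nonneg _
        have hptw : ∀ x, g x ≤ ENNReal.ofReal (3/2) *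
            ENNReal.ofReal (min (Real.exp (tt * (b x - c (J:ℤ×ℤ)))) M) := by
          intro x
          have hfact : Real.exp (tt * (b x - c K)) =
              Real.exp (tt * (c (J:ℤ×ℤ) - c K)) * Real.exp (tt * (b x - c (J:ℤ×ℤ))) := by
            rw [← Real.exp_add]
            congr 1
            ring
          have haB : Real.exp (tt * (c (J:ℤ×ℤ) - c K)) ≤ 3/2 := by
            apply exp_le_32
            calc tt * (c (J:ℤ×ℤ) - c K) ≤ |tt * (c (J:ℤ×ℤ) - c K)| := le_abs_self _
              _ = |tt| * |c (J:ℤ×ℤ) - c K| := abs_mul _ _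
              _ ≤ |tt| * (5*B) := mul_le_mul_of_nonneg_left (hc5 _ J.2) (abs_nonneg tt)
              _ = 5 * (|tt| * B) := by ring
              _ ≤ 5 * eps0 := by nlinarith [abs_nonneg tt]
          calc g x = ENNReal.ofReal (min (Real.exp (tt * (b x - c K))) M) := rfl
            _ ≤ ENNReal.ofReal ((3/2) * min (Real.exp (tt * (b x - c (J:ℤ×ℤ)))) M) := by
                apply ENNReal.ofReal_le_ofReal
                rw [hfact]
                exact min_mul_helper (Real.exp_nonneg _) haB (Real.exp_pos _).le hMnn
            _ = _ := ENNReal.ofReal_mul (by norm_num)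
        have hle : (μ (dint (J:ℤ×ℤ)))⁻¹ * F (J:ℤ×ℤ) M ≤ S M :=
          le_iSup (fun J' : ℤ×ℤ => (μ (dint J'))⁻¹ * F J' M) (J:ℤ×ℤ)
        have hFJ : F (J:ℤ×ℤ) M ≤ μ (dint (J:ℤ×ℤ)) * S M := by
          calc F (J:ℤ×ℤ) M = μ (dint (J:ℤ×ℤ)) * ((μ (dint (J:ℤ×ℤ)))⁻¹ * F (J:ℤ×ℤ) M) := by
                rw [← _root_.mul_assoc, ENNReal.mul_inv_cancel (hμ _).1.ne' (hμ _).2.ne, _root_.one_mul]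
            _ ≤ μ (dint (J:ℤ×ℤ)) * S M := mul_le_mul_right hle _
        calc ∫⁻ x in dint (J:ℤ×ℤ), g x ∂μ
            ≤ ∫⁻ x in dint (J:ℤ×ℤ), ENNReal.ofReal (3/2) *
              ENNReal.ofReal (min (Real.exp (tt * (b x - c (J:ℤ×ℤ)))) M) ∂μ :=
              lintegral_mono fun x => hptw x
          _ = ENNReal.ofReal (3/2) * F (J:ℤ×ℤ) M :=
              lintegral_const_mul' _ _ ENNReal.ofReal_ne_top
          _ ≤ ENNReal.ofReal (3/2) * (μ (dint (J:ℤ×ℤ)) * S M) := mul_le_mul_right hFJ _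
      have hAsum : ∫⁻ x in A, g x ∂μ = ∑' (J : Mx), ∫⁻ x in dint (J:ℤ×ℤ), g x ∂μ := by
        rw [hA, Set.biUnion_eq_iUnion,
          lintegral_iUnion (fun J => measurableSet_dint _) hpd']
      have hmA : (∑' (J : Mx), μ (dint (J:ℤ×ℤ))) = μ A :=
        (measure_biUnion hcnt hpd fun J _ => measurableSet_dint J).symm
      calc ∫⁻ x in A, g x ∂μ = ∑' (J : Mx), ∫⁻ x in dint (J:ℤ×ℤ), g x ∂μ := hAsum
        _ ≤ ∑' (J : Mx), ENNReal.ofReal (3/2) * (μ (dint (J:ℤ×ℤ)) * S M) :=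
            ENNReal.tsum_le_tsum hJbound
        _ = ENNReal.ofReal (3/2) * S M * ∑' (J : Mx), μ (dint (J:ℤ×ℤ)) := by
            rw [← ENNReal.tsum_mul_left]
            congr 1
            funext J
            ring
        _ = ENNReal.ofReal (3/2) * S M * μ A := by rw [hmA]
        _ ≤ ENNReal.ofReal (3/2) * S M * (ENNReal.ofReal (1/2) * μ (dint K)) :=
            mul_le_mul_right hmesA _
    have htotal : F K M ≤
        (ENNReal.ofReal (3/2) + ENNReal.ofReal (3/4) * S M) * μ (dint K) := by
      rw [hsplit]
      have h32 : ENNReal.ofReal (3/2) * S M * (ENNReal.ofReal (1/2) * μ (dint K)) =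
          ENNReal.ofReal (3/4) * S M * μ (dint K) := by
        rw [show ENNReal.ofReal (3/4) = ENNReal.ofReal (3/2) * ENNReal.ofReal (1/2) by
          rw [← ENNReal.ofReal_mul (by norm_num)]; norm_num]
        ring
      calc (∫⁻ x in A, g x ∂μ) + ∫⁻ x in dint K \ A, g x ∂μ
          ≤ ENNReal.ofReal (3/2) * S M * (ENNReal.ofReal (1/2) * μ (dint K)) +
            ENNReal.ofReal (3/2) * μ (dint K) := add_le_add hApart hU
        _ = (ENNReal.ofReal (3/2) + ENNReal.ofReal (3/4) * S M) * μ (dint K) := by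
            rw [h32]; ring
    calc (μ (dint K))⁻¹ * F K M
        ≤ (μ (dint K))⁻¹ * ((ENNReal.ofReal (3/2) + ENNReal.ofReal (3/4) * S M) * μ (dint K)) :=
          mul_le_mul_right htotal _
      _ = (ENNReal.ofReal (3/2) + ENNReal.ofReal (3/4) * S M) *
          ((μ (dint K))⁻¹ * μ (dint K)) := by ring
      _ = ENNReal.ofReal (3/2) + ENNReal.ofReal (3/4) * S M := by
          rw [ENNReal.inv_mul_cancel (hμ K).1.ne' (hμ K).2.ne, _root_.mul_one]
  -- solve the recursion
  have hS6 : ∀ M : ℕ, S M ≤ ENNReal.ofReal 6 := by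
    intro M
    have h1 : S M ≤ ENNReal.ofReal (3/2) + ENNReal.ofReal (3/4) * S M :=
      iSup_le fun J => hrec M J
    have h2 : (ENNReal.ofReal (3/2) + ENNReal.ofReal (3/4) * S M) ≠ ⊤ := by
      apply ENNReal.add_ne_top.2
      exact ⟨ENNReal.ofReal_ne_top, ENNReal.mul_ne_top ENNReal.ofReal_ne_top (hSfin M)⟩
    have h3 := ENNReal.toReal_mono h2 h1
    rw [ENNReal.toReal_add ENNReal.ofReal_ne_top
        (ENNReal.mul_ne_top ENNReal.ofReal_ne_top (hSfin M)), ENNReal.toReal_mul,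
      ENNReal.toReal_ofReal (by norm_num : (0:ℝ) ≤ 3/2),
      ENNReal.toReal_ofReal (by norm_num : (0:ℝ) ≤ 3/4)] at h3
    have h4 : (S M).toReal ≤ 6 := by linarith
    calc S M = ENNReal.ofReal (S M).toReal := (ENNReal.ofReal_toReal (hSfin M)).symm
      _ ≤ ENNReal.ofReal 6 := ENNReal.ofReal_le_ofReal h4
  -- monotone convergence
  have hmct : ∫⁻ x in dint I, ENNReal.ofReal (Real.exp (tt * (b x - c I))) ∂μ
      = ⨆ M : ℕ, F I M := by
    have hmeas : ∀ M : ℕ, AEMeasurable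
        (fun x => ENNReal.ofReal (min (Real.exp (tt * (b x - c I))) M)) (μ.restrict (dint I)) := by
      intro M
      exact ENNReal.measurable_ofReal.comp_aemeasurable
        ((Real.measurable_exp.comp_aemeasurable
          (((hbm.restrict).sub aemeasurable_const).const_mul tt)).min aemeasurable_const)
    rw [← lintegral_iSup' hmeas]
    · apply lintegral_congr
      intro x
      apply le_antisymm
      · refine le_iSup_of_le ⌈Real.exp (tt * (b x - c I))⌉₊ ?_
        rw [min_eq_left (Nat.le_ceil _)]
      · exact iSup_le fun M => ENNReal.ofReal_le_ofReal (min_le_left _ _)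
    · exact Filter.Eventually.of_forall fun x i j hij =>
        ENNReal.ofReal_le_ofReal (min_le_min le_rfl (Nat.cast_le.2 hij))
  rw [hmct]
  apply iSup_le
  intro M
  have h1 : F I M = μ (dint I) * ((μ (dint I))⁻¹ * F I M) := by
    rw [← _root_.mul_assoc, ENNReal.mul_inv_cancel (hμ I).1.ne' (hμ I).2.ne, _root_.one_mul]
  calc F I M = μ (dint I) * ((μ (dint I))⁻¹ * F I M) := h1
    _ ≤ μ (dint I) * ENNReal.ofReal 6 :=
        mul_le_mul_right (le_trans (le_iSup _ I) (hS6 M)) _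
    _ = ENNReal.ofReal 6 * μ (dint I) := _root_.mul_comm _ _






lemma exp_rpow' (a y : ℝ) : (Real.exp a) ^ y = Real.exp (a * y) := by
  rw [Real.rpow_def_of_pos (Real.exp_pos a), Real.log_exp]

lemma exp_setintegral_le (hμ : GoodMeasure μ) [IsLocallyFiniteMeasure μ]
    (hb : LocallyIntegrable b μ) {B tt : ℝ} (hB : 0 < B)
    (hquot : ∀ I, bmoQuot μ b I ≤ B) (ht : |tt| * B ≤ eps0) (I : ℤ × ℤ) :
    ∫ x in dint I, Real.exp (tt * (b x - avg μ I b)) ∂μ ≤ 6 * muR μ I := by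
  have hlin := jn_lintegral hμ hb hB hquot ht I
  have hmeas : AEStronglyMeasurable (fun x => Real.exp (tt * (b x - avg μ I b)))
      (μ.restrict (dint I)) :=
    Real.continuous_exp.comp_aestronglyMeasurable
      ((hb.aestronglyMeasurable.restrict.sub aestronglyMeasurable_const).const_mul tt)
  rw [integral_eq_lintegral_of_nonneg_ae
    (Filter.Eventually.of_forall fun x => (Real.exp_pos _).le) hmeas]
  have h2 : (ENNReal.ofReal 6 * μ (dint I)).toReal = 6 * muR μ I := by
    rw [ENNReal.toReal_mul, ENNReal.toReal_ofReal (by norm_num : (0:ℝ) ≤ 6)]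
    rfl
  rw [← h2]
  exact ENNReal.toReal_mono (ENNReal.mul_ne_top ENNReal.ofReal_ne_top (hμ I).2.ne) hlin

lemma avg_exp_le (hμ : GoodMeasure μ) [IsLocallyFiniteMeasure μ]
    (hb : LocallyIntegrable b μ) {B s : ℝ} (hB : 0 < B)
    (hquot : ∀ I, bmoQuot μ b I ≤ B) (hs : |s| * B ≤ eps0) {I K : ℤ × ℤ}
    (hK : K = I ∨ K = pa I) :
    avg μ I (fun x => Real.exp (s * b x)) ≤
      6 * Real.exp eps0 * Real.exp (s * avg μ K b) := by
  have hpos := muR_pos hμ I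
  have h1 : avg μ I (fun x => Real.exp (s * b x)) =
      Real.exp (s * avg μ I b) * ((muR μ I)⁻¹ * ∫ x in dint I,
        Real.exp (s * (b x - avg μ I b)) ∂μ) := by
    rw [avg]
    have h2 : ∀ x, Real.exp (s * b x) =
        Real.exp (s * avg μ I b) * Real.exp (s * (b x - avg μ I b)) := by
      intro x; rw [← Real.exp_add]; congr 1; ring
    rw [show (∫ x in dint I, Real.exp (s * b x) ∂μ) =
        ∫ x in dint I, Real.exp (s * avg μ I b) * Real.exp (s * (b x - avg μ I b)) ∂μ from by
      exact integral_congr_ae (Filter.Eventually.of_forall h2)]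
    rw [integral_const_mul]
    ring
  have h3 : (muR μ I)⁻¹ * ∫ x in dint I, Real.exp (s * (b x - avg μ I b)) ∂μ ≤ 6 := by
    have := exp_setintegral_le hμ hb hB hquot hs I
    calc (muR μ I)⁻¹ * ∫ x in dint I, Real.exp (s * (b x - avg μ I b)) ∂μ
        ≤ (muR μ I)⁻¹ * (6 * muR μ I) := mul_le_mul_of_nonneg_left this (inv_pos.2 hpos).le
      _ = 6 := by field_simp
  have h4 : Real.exp (s * avg μ I b) ≤ Real.exp eps0 * Real.exp (s * avg μ K b) := by
    rw [← Real.exp_add]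
    apply Real.exp_le_exp.2
    have h5 : |avg μ I b - avg μ K b| ≤ B := by
      rcases hK with rfl | rfl
      · simp [abs_nonneg, hB.le]
      · exact le_trans (abs_avg_sub_avg_pa hμ hb I) (hquot I)
    have h6 : s * avg μ I b - s * avg μ K b ≤ eps0 := by
      calc s * avg μ I b - s * avg μ K b = s * (avg μ I b - avg μ K b) := by ring
        _ ≤ |s * (avg μ I b - avg μ K b)| := le_abs_self _
        _ = |s| * |avg μ I b - avg μ K b| := abs_mul _ _
        _ ≤ |s| * B := mul_le_mul_of_nonneg_left h5 (abs_nonneg s)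
        _ ≤ eps0 := hs
    linarith
  have hexpnn : (0:ℝ) ≤ Real.exp (s * avg μ I b) := (Real.exp_pos _).le
  calc avg μ I (fun x => Real.exp (s * b x))
      = Real.exp (s * avg μ I b) * ((muR μ I)⁻¹ * ∫ x in dint I,
          Real.exp (s * (b x - avg μ I b)) ∂μ) := h1
    _ ≤ Real.exp (s * avg μ I b) * 6 := mul_le_mul_of_nonneg_left h3 hexpnn
    _ = 6 * Real.exp (s * avg μ I b) := _root_.mul_comm _ _
    _ ≤ 6 * (Real.exp eps0 * Real.exp (s * avg μ K b)) :=
        mul_le_mul_of_nonneg_left h4 (by norm_num)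
    _ = 6 * Real.exp eps0 * Real.exp (s * avg μ K b) := by ring

lemma avg_nonneg' (μ : Measure ℝ) (I : ℤ × ℤ) {f : ℝ → ℝ} (hf : ∀ x, 0 ≤ f x) :
    0 ≤ avg μ I f :=
  mul_nonneg (inv_nonneg.2 ENNReal.toReal_nonneg) (integral_nonneg hf)

theorem stmt9_main (p : ℝ) (hp : 1 < p) :
    ∀ μ : Measure ℝ, IsLocallyFiniteMeasure μ → GoodMeasure μ →
      ∀ b : ℝ → ℝ, MemBMO μ b → 0 < bmoNorm μ b →
      ∀ δ : ℝ, 0 < δ → δ < eps0 * min 1 (p - 1) / bmoNorm μ b →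
        AhatLE μ p (fun x => Real.exp (δ * b x)) ((6 * Real.exp eps0) ^ p) := by
  intro μ hlf hμ b hmem hnorm δ hδ hδlt
  haveI := hlf
  have hb := hmem.1
  set B := bmoNorm μ b with hBdef
  have hquot : ∀ I, bmoQuot μ b I ≤ B := fun I => le_ciSup hmem.2 I
  have hp1 : (0:ℝ) < p - 1 := by linarith
  have hδB : δ * B < eps0 * min 1 (p-1) := by
    rw [div_eq_mul_inv] at hδlt
    calc δ * B < eps0 * min 1 (p-1) * B⁻¹ * B :=
          mul_lt_mul_of_pos_right hδlt hnorm
      _ = eps0 * min 1 (p-1) := by field_simp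
  have h1 : |δ| * B ≤ eps0 := by
    rw [abs_of_pos hδ]
    have hm : min 1 (p-1) ≤ 1 := min_le_left _ _
    nlinarith [eps0_pos]
  set s2 : ℝ := δ * (-1 / (p - 1)) with hs2def
  have h2 : |s2| * B ≤ eps0 := by
    have hs2 : |s2| = δ / (p - 1) := by
      rw [hs2def, abs_mul, abs_of_pos hδ, abs_div, abs_neg, abs_one,
        abs_of_pos hp1]
      ring
    rw [hs2]
    have hm : min 1 (p-1) ≤ p - 1 := min_le_right _ _
    have h3 : δ * B ≤ eps0 * (p - 1) := by nlinarith [eps0_pos]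
    rw [div_mul_eq_mul_div, div_le_iff₀ hp1]
    linarith [h3]
  have hdual : dual p (fun x => Real.exp (δ * b x)) = fun x => Real.exp (s2 * b x) := by
    funext x
    rw [dual]
    rw [Real.rpow_def_of_pos (Real.exp_pos _), Real.log_exp]
    congr 1
    rw [hs2def]
    ring
  intro I J hIJ
  have key : ∀ K : ℤ × ℤ, (K = I ∨ K = pa I) → (K = J ∨ K = pa J) →
      avg μ I (fun x => Real.exp (δ * b x)) *
        (avg μ J (dual p (fun x => Real.exp (δ * b x)))) ^ (p - 1) ≤
        (6 * Real.exp eps0) ^ p := by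
    intro K hKI hKJ
    set cK := avg μ K b with hcK
    have hw : avg μ I (fun x => Real.exp (δ * b x)) ≤
        6 * Real.exp eps0 * Real.exp (δ * cK) :=
      avg_exp_le hμ hb hnorm hquot h1 hKI
    have hσle : avg μ J (dual p (fun x => Real.exp (δ * b x))) ≤
        6 * Real.exp eps0 * Real.exp (s2 * cK) := by
      rw [hdual]
      exact avg_exp_le hμ hb hnorm hquot h2 hKJ
    have hσnn : 0 ≤ avg μ J (dual p (fun x => Real.exp (δ * b x))) := by
      rw [hdual]
      exact avg_nonneg' μ J fun x => (Real.exp_pos _).le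
    have hprod : avg μ I (fun x => Real.exp (δ * b x)) *
        (avg μ J (dual p (fun x => Real.exp (δ * b x)))) ^ (p - 1) ≤
        (6 * Real.exp eps0 * Real.exp (δ * cK)) *
          (6 * Real.exp eps0 * Real.exp (s2 * cK)) ^ (p - 1) := by
      apply mul_le_mul hw
        (Real.rpow_le_rpow hσnn hσle (by linarith))
        (Real.rpow_nonneg hσnn _) (by positivity)
    have heq : (6 * Real.exp eps0 * Real.exp (δ * cK)) *
        (6 * Real.exp eps0 * Real.exp (s2 * cK)) ^ (p - 1) =
        (6 * Real.exp eps0) ^ p := by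
      rw [Real.mul_rpow (by positivity) (Real.exp_pos _).le, exp_rpow']
      have hs2p : s2 * cK * (p - 1) = -(δ * cK) := by
        rw [hs2def]; field_simp
      rw [hs2p, Real.exp_neg]
      have hA : (0:ℝ) < 6 * Real.exp eps0 := by positivity
      have hrw : (6 * Real.exp eps0) * (6 * Real.exp eps0) ^ (p-1) =
          (6 * Real.exp eps0) ^ p := by
        nth_rewrite 1 [← Real.rpow_one (6 * Real.exp eps0)]
        rw [← Real.rpow_add hA]
        norm_num
      field_simp
      nlinarith [hrw, Real.exp_pos (δ * cK), Real.exp_pos eps0,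
        Real.rpow_pos_of_pos hA (p-1)]
    exact le_trans hprod (le_of_eq heq)
  rcases hIJ with rfl | rfl | h
  · exact key J (Or.inl rfl) (Or.inl rfl)
  · exact key (pa I) (Or.inr rfl) (Or.inl rfl)
  · exact key I (Or.inl rfl) (Or.inr h)



/-- There are constants `C₁, C₂ > 0` depending only on `p` such that for
every `b ∈ BMO(μ)` with positive norm and every
`0 < δ < C₁·min{1, p−1}/‖b‖_{BMO(μ)}`, the weight `e^{δb}` belongs to `Â_p(μ)` with
characteristic at most `C₂`. -/
theorem stmt9 (p : ℝ) (hp : 1 < p) :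
    ∃ C₁ C₂ : ℝ, 0 < C₁ ∧ 0 < C₂ ∧
      ∀ μ : Measure ℝ, IsLocallyFiniteMeasure μ → GoodMeasure μ →
      ∀ b : ℝ → ℝ, MemBMO μ b → 0 < bmoNorm μ b →
      ∀ δ : ℝ, 0 < δ → δ < C₁ * min 1 (p - 1) / bmoNorm μ b →
        AhatLE μ p (fun x => Real.exp (δ * b x)) C₂ := by
  exact ⟨eps0, (6 * Real.exp eps0) ^ p, eps0_pos,
    Real.rpow_pos_of_pos (by positivity) p, stmt9_main p hp⟩

end Dyadic
end
end
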